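/- arXiv:1307.6147 — 4 statements merged into one kernel-verified Lean document; each statement's English description precedes it below -/
import Mathlib

section
/- If T and T̃ are standard Young tableaux with n boxes whose underlying Young diagrams (shapes) are different, then Y_T · σ · Y_{T̃} = 0 in ℂ[S_n] for every permutation σ ∈ S_n; in particular Y_T · Y_{T̃} = 0. -/
open scoped Classical

/-- A standard Young tableau with `n` boxes: the boxes of a Young diagram are filled
bijectively with the numbers `1, …, n`, increasing along each row and down each column.
The entry function is `0` outside the diagram, making the representation canonical. -/
structure SYT (n : ℕ) where
  shape : YoungDiagram
  entry : ℕ × ℕ → ℕ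
  zero_outside : ∀ c : ℕ × ℕ, c ∉ shape.cells → entry c = 0
  bijOn : Set.BijOn entry (shape.cells : Set (ℕ × ℕ)) (Set.Icc 1 n)
  row_lt : ∀ i j₁ j₂ : ℕ, j₁ < j₂ → (i, j₂) ∈ shape.cells → entry (i, j₁) < entry (i, j₂)
  col_lt : ∀ i₁ i₂ j : ℕ, i₁ < i₂ → (i₂, j) ∈ shape.cells → entry (i₁, j) < entry (i₂, j)

namespace SYT

/-- The row index of the box of `T` containing the number `x + 1`. -/
def rowOf {n : ℕ} (T : SYT n) (x : Fin n) : ℕ :=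
  (T.shape.cells.filter fun c => T.entry c = (x : ℕ) + 1).sup Prod.fst

/-- The column index of the box of `T` containing the number `x + 1`. -/
def colOf {n : ℕ} (T : SYT n) (x : Fin n) : ℕ :=
  (T.shape.cells.filter fun c => T.entry c = (x : ℕ) + 1).sup Prod.snd

/-- A permutation is horizontal for `T` (i.e. belongs to the row group `R(T)`)
if it preserves the set of numbers in each row of `T`. -/
def IsHorizontal {n : ℕ} (T : SYT n) (σ : Equiv.Perm (Fin n)) : Prop :=
  ∀ x, T.rowOf (σ x) = T.rowOf x

/-- A permutation is vertical for `T` (i.e. belongs to the column group `C(T)`)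
if it preserves the set of numbers in each column of `T`. -/
def IsVertical {n : ℕ} (T : SYT n) (σ : Equiv.Perm (Fin n)) : Prop :=
  ∀ x, T.colOf (σ x) = T.colOf x

/-- The row symmetrizer `s_T = ∑_{h ∈ R(T)} h` in `ℂ[S_n]`. -/
noncomputable def rowSym {n : ℕ} (T : SYT n) : MonoidAlgebra ℂ (Equiv.Perm (Fin n)) :=
  ∑ σ ∈ Finset.univ.filter (fun σ => T.IsHorizontal σ),
    MonoidAlgebra.of ℂ (Equiv.Perm (Fin n)) σ

/-- The column antisymmetrizer `a_T = ∑_{v ∈ C(T)} sgn(v)·v` in `ℂ[S_n]`. -/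
noncomputable def colAntisym {n : ℕ} (T : SYT n) : MonoidAlgebra ℂ (Equiv.Perm (Fin n)) :=
  ∑ σ ∈ Finset.univ.filter (fun σ => T.IsVertical σ),
    ((Equiv.Perm.sign σ : ℤ) : ℂ) • MonoidAlgebra.of ℂ (Equiv.Perm (Fin n)) σ

end SYT

/-- The hook length of the box `c` of the Young diagram `μ`: the number of boxes to its
right in its row, plus the number of boxes below it in its column, plus one. -/
def hookLength (μ : YoungDiagram) (c : ℕ × ℕ) : ℕ :=
  (μ.rowLen c.1 - (c.2 + 1)) + (μ.colLen c.2 - (c.1 + 1)) + 1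

/-- `H(T)`: the product of the hook lengths of the boxes of the Young diagram `μ`. -/
def hookProd (μ : YoungDiagram) : ℕ :=
  ∏ c ∈ μ.cells, hookLength μ c

/-- The Young operator `Y_T = (1/H(T)) · s_T · a_T ∈ ℂ[S_n]`. -/
noncomputable def youngOp {n : ℕ} (T : SYT n) : MonoidAlgebra ℂ (Equiv.Perm (Fin n)) :=
  ((hookProd T.shape : ℂ))⁻¹ • (T.rowSym * T.colAntisym)

/-- `f_T(N) = ∏_{(j,k)} (N + k − j)`, the product running over the boxes of the Young
diagram `μ` in row `j` and column `k` (here boxes `c = (c.1, c.2)` are 0-indexed,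
with `c.1` the row and `c.2` the column, so the content `k - j` is `c.2 - c.1`). -/
noncomputable def fPoly (μ : YoungDiagram) (N : ℕ) : ℂ :=
  ∏ c ∈ μ.cells, ((N : ℂ) + (c.2 : ℂ) - (c.1 : ℂ))

/-! Since the shapes differ, for some `k` the first `k` rows of one shape hold more boxes than
the first `k` rows of the other. By pigeonhole, for every `σ` two numbers then share a column of
one tableau and, after applying `σ`, a row of the other. The transposition `t` of these numbers
is vertical for the first tableau and, conjugated by `σ`, horizontal for the second, so
`a_T σ s_T' = a_T t σ s_T' = -a_T σ s_T'` vanishes (or, symmetrically, `s_T σ a_T' = 0` for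
every `σ`, hence `s_T x a_T' = 0` for every `x` by linearity). Either factorisation kills
`Y_T σ Y_T'`. -/

open Finset

namespace Equiv.Perm

variable {α β : Type*}

def fiberStabilizer (f : α → β) : Subgroup (Perm α) where
  carrier := {σ | ∀ x, f (σ x) = f x}
  mul_mem' hg hh x := (hg _).trans (hh x)
  one_mem' _ := rfl
  inv_mem' {g} hg x := by simpa using (hg (g⁻¹ x)).symm

lemma swap_mem_fiberStabilizer [DecidableEq α] {f : α → β} {x y : α} (h : f x = f y) :
    swap x y ∈ fiberStabilizer f := by
  intro z
  rcases eq_or_ne z x with rfl | hzx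
  · rw [swap_apply_left, h]
  rcases eq_or_ne z y with rfl | hzy
  · rw [swap_apply_right, h]
  · rw [swap_apply_of_ne_of_ne hzx hzy]

end Equiv.Perm

section AbsorbingElements

variable {R : Type*} [Ring R] [IsAddTorsionFree R] {a b g u v : R}

lemma mul_mul_eq_zero_of_mul_eq_neg_of_mul_eq (ha : a * u = -a) (hconj : u * g = g * v)
    (hb : v * b = b) : a * g * b = 0 :=
  self_eq_neg.mp <| calc
    a * g * b = a * g * (v * b) := by rw [hb]
    _ = a * u * g * b := by rw [mul_assoc a u, hconj]; simp only [mul_assoc]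
    _ = -(a * g * b) := by rw [ha, neg_mul, neg_mul]

lemma mul_mul_eq_zero_of_mul_eq_of_mul_eq_neg (ha : a * u = a) (hconj : u * g = g * v)
    (hb : v * b = -b) : a * g * b = 0 :=
  self_eq_neg.mp <| calc
    a * g * b = a * u * g * b := by rw [ha]
    _ = a * g * (v * b) := by rw [mul_assoc a u, hconj]; simp only [mul_assoc]
    _ = -(a * g * b) := by rw [hb, mul_neg, mul_assoc]

end AbsorbingElements

instance {k G : Type*} [Field k] [CharZero k] [Monoid G] :
    IsAddTorsionFree (MonoidAlgebra k G) :=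
  .of_module_rat _

lemma MonoidAlgebra.mul_mul_eq_zero_of_forall_of {k G : Type*} [CommSemiring k] [Monoid G]
    {a b : MonoidAlgebra k G} (h : ∀ g, a * of k G g * b = 0) (x : MonoidAlgebra k G) :
    a * x * b = 0 := by
  induction x using MonoidAlgebra.induction_on with
  | of g => exact h g
  | add x y hx hy => rw [mul_add, add_mul, hx, hy, add_zero]
  | smul r x hx => rw [mul_smul_comm, smul_mul_assoc, hx, smul_zero]

lemma Finset.card_filter_lt_eq_sum_card_filter_eq {α : Type*} (s : Finset α) (f : α → ℕ)
    (k : ℕ) : #{x ∈ s | f x < k} = ∑ i ∈ range k, #{x ∈ s | f x = i} := by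
  rw [card_eq_sum_card_fiberwise (f := f) (t := range k)
    fun x hx => mem_range.mpr (mem_filter.mp hx).2]
  refine sum_congr rfl fun i hi => ?_
  rw [filter_filter]
  exact congrArg card <|
    filter_congr fun x _ => ⟨And.right, fun h => ⟨h ▸ mem_range.mp hi, h⟩⟩

namespace YoungDiagram

lemma card_filter_fst_lt (μ : YoungDiagram) (k : ℕ) :
    #{c ∈ μ.cells | c.1 < k} = ∑ i ∈ range k, μ.rowLen i := by
  rw [card_filter_lt_eq_sum_card_filter_eq]
  exact sum_congr rfl fun i _ => μ.rowLen_eq_card.symm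

lemma card_filter_fst_lt_snd_eq (μ : YoungDiagram) (k j : ℕ) :
    #{c ∈ μ.cells | c.1 < k ∧ c.2 = j} = min (μ.colLen j) k := by
  have : {c ∈ μ.cells | c.1 < k ∧ c.2 = j} = {c ∈ μ.col j | c.1 < k} := by
    rw [col, filter_filter]
    exact filter_congr fun c _ => and_comm
  rw [this, col_eq_prod, filter_product_left (· < k), card_product, card_singleton, mul_one,
    show {i ∈ range (μ.colLen j) | i < k} = range (min (μ.colLen j) k) by ext; simp, card_range]

lemma eq_of_sum_range_rowLen_eq {μ ν : YoungDiagram}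
    (h : ∀ k, ∑ i ∈ range k, μ.rowLen i = ∑ i ∈ range k, ν.rowLen i) : μ = ν := by
  have hrow (i : ℕ) : μ.rowLen i = ν.rowLen i := by
    have := h (i + 1)
    rwa [sum_range_succ, sum_range_succ, h i, Nat.add_left_cancel_iff] at this
  ext ⟨i, j⟩
  simp only [mem_cells, mem_iff_lt_rowLen, hrow]

lemma exists_sum_range_rowLen_lt_of_ne {μ ν : YoungDiagram} (h : μ ≠ ν) :
    (∃ k, ∑ i ∈ range k, μ.rowLen i < ∑ i ∈ range k, ν.rowLen i) ∨
      ∃ k, ∑ i ∈ range k, ν.rowLen i < ∑ i ∈ range k, μ.rowLen i := by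
  by_contra! hle
  exact h (eq_of_sum_range_rowLen_eq fun k => le_antisymm (hle.2 k) (hle.1 k))

/-- In column `j` the elements with `r x < k` have distinct rows, so there are at most
`min (ν.colLen j) k` of them: the number of boxes of `ν` in column `j` and the first `k` rows. -/
lemma sum_range_rowLen_le_of_injective {α : Type*} [Fintype α] (μ ν : YoungDiagram)
    (r c : α → ℕ) (hr : ∀ i, #{x | r x = i} = μ.rowLen i)
    (hc : ∀ j, #{x | c x = j} ≤ ν.colLen j) (hinj : Function.Injective fun x => (r x, c x))
    (k : ℕ) : ∑ i ∈ range k, μ.rowLen i ≤ ∑ i ∈ range k, ν.rowLen i := by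
  set S : Finset α := {x | r x < k}
  have hS : #S = ∑ i ∈ range k, μ.rowLen i :=
    (card_filter_lt_eq_sum_card_filter_eq univ r k).trans (sum_congr rfl fun i _ => hr i)
  have hcol (j : ℕ) : #{x ∈ S | c x = j} ≤ min (ν.colLen j) k := by
    refine le_min ((card_le_card ?_).trans (hc j)) ?_
    · exact filter_subset_filter _ (subset_univ S)
    · refine (card_le_card_of_injOn r (fun x hx => ?_) fun x hx y hy hxy => ?_).trans_eq
        (card_range k)
      · simpa [S] using (mem_filter.mp hx).1
      · exact hinj (Prod.ext hxy (((mem_filter.mp hx).2).trans (mem_filter.mp hy).2.symm))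
  calc ∑ i ∈ range k, μ.rowLen i = #S := hS.symm
    _ = ∑ j ∈ S.image c, #{x ∈ S | c x = j} := card_eq_sum_card_image c S
    _ ≤ ∑ j ∈ S.image c, #{p ∈ ν.cells | p.1 < k ∧ p.2 = j} := by
      gcongr with j
      rw [card_filter_fst_lt_snd_eq]
      exact hcol j
    _ ≤ #{p ∈ ν.cells | p.1 < k} := by
      simp only [← filter_filter]
      rw [sum_card_fiberwise_eq_card_filter]
      exact card_filter_le _ _
    _ = ∑ i ∈ range k, ν.rowLen i := card_filter_fst_lt ν k

end YoungDiagram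

namespace SYT

open Equiv Perm MonoidAlgebra

variable {n : ℕ}

section

variable (T : SYT n)

lemma exists_cell (x : Fin n) : ∃ c ∈ T.shape.cells, T.entry c = (x : ℕ) + 1 := by
  have hx : (x : ℕ) + 1 ∈ Set.Icc 1 n := ⟨Nat.le_add_left 1 _, x.2⟩
  obtain ⟨c, hc, hce⟩ := T.bijOn.surjOn hx
  exact ⟨c, mem_coe.mp hc, hce⟩

noncomputable def cellOf (x : Fin n) : ℕ × ℕ :=
  (T.exists_cell x).choose

lemma cellOf_mem (x : Fin n) : T.cellOf x ∈ T.shape.cells :=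
  (T.exists_cell x).choose_spec.1

lemma entry_cellOf (x : Fin n) : T.entry (T.cellOf x) = (x : ℕ) + 1 :=
  (T.exists_cell x).choose_spec.2

lemma cellOf_eq_iff {x : Fin n} {c : ℕ × ℕ} (hc : c ∈ T.shape.cells) :
    T.cellOf x = c ↔ T.entry c = (x : ℕ) + 1 :=
  ⟨fun h => h ▸ T.entry_cellOf x, fun h => T.bijOn.injOn (mem_coe.mpr (T.cellOf_mem x))
    (mem_coe.mpr hc) (by rw [T.entry_cellOf, h])⟩

lemma filter_entry_eq (x : Fin n) :
    {c ∈ T.shape.cells | T.entry c = (x : ℕ) + 1} = {T.cellOf x} := by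
  ext c
  rw [mem_filter, mem_singleton]
  exact ⟨fun ⟨hc, he⟩ => ((T.cellOf_eq_iff hc).mpr he).symm,
    fun h => h ▸ ⟨T.cellOf_mem x, T.entry_cellOf x⟩⟩

lemma rowOf_eq (x : Fin n) : T.rowOf x = (T.cellOf x).1 := by
  rw [rowOf, filter_entry_eq, sup_singleton]

lemma colOf_eq (x : Fin n) : T.colOf x = (T.cellOf x).2 := by
  rw [colOf, filter_entry_eq, sup_singleton]

lemma card_filter_cellOf (p : ℕ × ℕ → Prop) [DecidablePred p] :
    #{x | p (T.cellOf x)} = #{c ∈ T.shape.cells | p c} := by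
  refine card_nbij T.cellOf (fun x hx => ?_) (fun x _ y _ h => ?_) (fun c hc => ?_)
  · exact mem_filter.mpr ⟨T.cellOf_mem x, (mem_filter.mp hx).2⟩
  · have := T.entry_cellOf y
    rw [← h, T.entry_cellOf] at this
    exact Fin.ext (Nat.add_right_cancel this)
  · obtain ⟨hc, hp⟩ := mem_filter.mp hc
    obtain ⟨h1, h2⟩ := T.bijOn.mapsTo (mem_coe.mpr hc)
    have hx : T.cellOf ⟨T.entry c - 1, by omega⟩ = c := (T.cellOf_eq_iff hc).mpr (by
      rw [Fin.val_mk]; omega)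
    exact ⟨_, mem_filter.mpr ⟨mem_univ _, by rwa [hx]⟩, hx⟩

lemma card_rowOf_eq (i : ℕ) : #{x | T.rowOf x = i} = T.shape.rowLen i := by
  simp only [rowOf_eq]
  rw [card_filter_cellOf T (·.1 = i), YoungDiagram.rowLen_eq_card, YoungDiagram.row]

lemma card_colOf_eq (j : ℕ) : #{x | T.colOf x = j} = T.shape.colLen j := by
  simp only [colOf_eq]
  rw [card_filter_cellOf T (·.2 = j), YoungDiagram.colLen_eq_card, YoungDiagram.col]

lemma isHorizontal_iff {σ : Perm (Fin n)} : T.IsHorizontal σ ↔ σ ∈ fiberStabilizer T.rowOf :=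
  Iff.rfl

lemma isVertical_iff {σ : Perm (Fin n)} : T.IsVertical σ ↔ σ ∈ fiberStabilizer T.colOf :=
  Iff.rfl

end

section

variable {T : SYT n} {σ : Perm (Fin n)}

lemma of_mul_rowSym (hσ : T.IsHorizontal σ) : of ℂ _ σ * T.rowSym = T.rowSym := by
  rw [rowSym, mul_sum]
  refine sum_equiv (Equiv.mulLeft σ) (fun τ => ?_) fun τ _ => (map_mul _ _ _).symm
  simp only [mem_filter, mem_univ, true_and, coe_mulLeft, isHorizontal_iff]
  exact (Subgroup.mul_mem_cancel_left _ hσ).symm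

lemma rowSym_mul_of (hσ : T.IsHorizontal σ) : T.rowSym * of ℂ _ σ = T.rowSym := by
  rw [rowSym, sum_mul]
  refine sum_equiv (Equiv.mulRight σ) (fun τ => ?_) fun τ _ => (map_mul _ _ _).symm
  simp only [mem_filter, mem_univ, true_and, coe_mulRight, isHorizontal_iff]
  exact (Subgroup.mul_mem_cancel_right _ hσ).symm

lemma of_mul_colAntisym (hσ : T.IsVertical σ) :
    of ℂ _ σ * T.colAntisym = ((sign σ : ℤ) : ℂ) • T.colAntisym := by
  rw [colAntisym, mul_sum, smul_sum]
  refine sum_equiv (Equiv.mulLeft σ) (fun τ => ?_) fun τ _ => ?_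
  · simp only [mem_filter, mem_univ, true_and, coe_mulLeft, isVertical_iff]
    exact (Subgroup.mul_mem_cancel_left _ hσ).symm
  · rw [mul_smul_comm, ← map_mul, smul_smul, ← Int.cast_mul, ← Units.val_mul, coe_mulLeft,
      Perm.sign_mul, ← mul_assoc, Int.units_mul_self, one_mul]

lemma colAntisym_mul_of (hσ : T.IsVertical σ) :
    T.colAntisym * of ℂ _ σ = ((sign σ : ℤ) : ℂ) • T.colAntisym := by
  rw [colAntisym, sum_mul, smul_sum]
  refine sum_equiv (Equiv.mulRight σ) (fun τ => ?_) fun τ _ => ?_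
  · simp only [mem_filter, mem_univ, true_and, coe_mulRight, isVertical_iff]
    exact (Subgroup.mul_mem_cancel_right _ hσ).symm
  · rw [smul_mul_assoc, ← map_mul, smul_smul, ← Int.cast_mul, ← Units.val_mul, coe_mulRight,
      Perm.sign_mul, mul_left_comm, Int.units_mul_self, mul_one]

end

lemma exists_ne_colOf_eq_rowOf_eq (C R : SYT n) (π : Perm (Fin n)) {k : ℕ}
    (hk : ∑ i ∈ range k, C.shape.rowLen i < ∑ i ∈ range k, R.shape.rowLen i) :
    ∃ x y, x ≠ y ∧ C.colOf x = C.colOf y ∧ R.rowOf (π x) = R.rowOf (π y) := by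
  by_contra! h
  refine hk.not_ge (YoungDiagram.sum_range_rowLen_le_of_injective R.shape C.shape
    (fun x => R.rowOf (π x)) C.colOf (fun i => ?_) (fun j => (C.card_colOf_eq j).le) ?_ k)
  · rw [← R.card_rowOf_eq i]
    exact card_equiv π (by simp)
  · intro x y hxy
    by_contra hne
    exact h x y hne (congrArg Prod.snd hxy) (congrArg Prod.fst hxy)

variable {T T' : SYT n} {k : ℕ}

lemma colAntisym_mul_of_mul_rowSym_eq_zero
    (hk : ∑ i ∈ range k, T.shape.rowLen i < ∑ i ∈ range k, T'.shape.rowLen i)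
    (σ : Perm (Fin n)) : T.colAntisym * of ℂ _ σ * T'.rowSym = 0 := by
  obtain ⟨x, y, hxy, hcol, hrow⟩ := exists_ne_colOf_eq_rowOf_eq T T' σ⁻¹ hk
  refine mul_mul_eq_zero_of_mul_eq_neg_of_mul_eq (u := of ℂ _ (swap x y))
    (v := of ℂ _ (swap (σ⁻¹ x) (σ⁻¹ y))) ?_ ?_
    (of_mul_rowSym (swap_mem_fiberStabilizer hrow))
  · rw [colAntisym_mul_of (swap_mem_fiberStabilizer hcol), sign_swap hxy]
    simp
  · rw [← map_mul, ← map_mul, swap_apply_apply]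
    group

lemma rowSym_mul_of_mul_colAntisym_eq_zero
    (hk : ∑ i ∈ range k, T'.shape.rowLen i < ∑ i ∈ range k, T.shape.rowLen i)
    (σ : Perm (Fin n)) : T.rowSym * of ℂ _ σ * T'.colAntisym = 0 := by
  obtain ⟨x, y, hxy, hcol, hrow⟩ := exists_ne_colOf_eq_rowOf_eq T' T σ hk
  refine mul_mul_eq_zero_of_mul_eq_of_mul_eq_neg (u := of ℂ _ (swap (σ x) (σ y)))
    (v := of ℂ _ (swap x y)) (rowSym_mul_of (swap_mem_fiberStabilizer hrow)) ?_ ?_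
  · rw [← map_mul, ← map_mul, swap_apply_apply]
    group
  · rw [of_mul_colAntisym (swap_mem_fiberStabilizer hcol), sign_swap hxy]
    simp

end SYT

/-- **Young operators of different shapes annihilate each other.**  If `T` and `T̃` are
standard Young tableaux with `n` boxes whose underlying Young diagrams are different,
then `Y_T · σ · Y_{T̃} = 0` for every permutation `σ ∈ S_n`; in particular
`Y_T · Y_{T̃} = 0`. -/
theorem youngOp_mul_perm_mul_youngOp_eq_zero {n : ℕ} (T T' : SYT n)
    (hshape : T.shape ≠ T'.shape) :
    (∀ σ : Equiv.Perm (Fin n),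
        youngOp T * MonoidAlgebra.of ℂ (Equiv.Perm (Fin n)) σ * youngOp T' = 0) ∧
      youngOp T * youngOp T' = 0 := by
  have key (σ : Equiv.Perm (Fin n)) :
      T.rowSym * (T.colAntisym * MonoidAlgebra.of ℂ _ σ * T'.rowSym) * T'.colAntisym = 0 := by
    rcases YoungDiagram.exists_sum_range_rowLen_lt_of_ne hshape with ⟨k, hk⟩ | ⟨k, hk⟩
    · rw [SYT.colAntisym_mul_of_mul_rowSym_eq_zero hk, mul_zero, zero_mul]
    · exact MonoidAlgebra.mul_mul_eq_zero_of_forall_of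
        (SYT.rowSym_mul_of_mul_colAntisym_eq_zero hk) _
  have main (σ : Equiv.Perm (Fin n)) :
      youngOp T * MonoidAlgebra.of ℂ _ σ * youngOp T' = 0 := by
    have h : T.rowSym * T.colAntisym * MonoidAlgebra.of ℂ _ σ * (T'.rowSym * T'.colAntisym) =
        0 := by simpa only [mul_assoc] using key σ
    rw [youngOp, youngOp, smul_mul_assoc, smul_mul_assoc, mul_smul_comm, h, smul_zero, smul_zero]
  exact ⟨main, by simpa only [map_one, mul_one] using main 1⟩
end

section
/- Let T be a standard Young tableau with n boxes and let N ≥ 1. Then the trace of the linear operator D(Y_T) on (ℂ^N)^{⊗n} equals f_T(N)/H(T), where f_T(N) = ∏_{(j,k)} (N + k − j), the product running over all boxes of the shape of T located in row j and column k, and H(T) is the product of the hook lengths of the boxes of the shape of T. -/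
open scoped Classical

/-- `(ℂ^N)^{⊗n}`, realized concretely as the Euclidean space whose orthonormal basis is
indexed by functions `Fin n → Fin N` (the product basis built from the standard basis
of `ℂ^N`); its inner product is the one induced by the standard Hermitian inner
product on `ℂ^N`. -/
abbrev TensorPow (N n : ℕ) := EuclideanSpace ℂ (Fin n → Fin N)

/-- The representation of `S_n` on `(ℂ^N)^{⊗n}` which permutes the tensor factors. -/
def permAction (N n : ℕ) : Equiv.Perm (Fin n) →* Module.End ℂ (TensorPow N n) where
  toFun σ :=
    { toFun := fun v => WithLp.toLp 2 (fun f => v (f ∘ σ) : (Fin n → Fin N) → ℂ)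
      map_add' := fun _ _ => rfl
      map_smul' := fun _ _ => rfl }
  map_one' := rfl
  map_mul' := fun _ _ => rfl

/-- The algebra homomorphism `D : ℂ[S_n] → End((ℂ^N)^{⊗n})` extending the representation
of `S_n` on the `n`-fold tensor power of `ℂ^N` permuting tensor factors. -/
noncomputable def Dmap (N n : ℕ) :
    MonoidAlgebra ℂ (Equiv.Perm (Fin n)) →ₐ[ℂ] Module.End ℂ (TensorPow N n) :=
  MonoidAlgebra.lift ℂ (Module.End ℂ (TensorPow N n)) (Equiv.Perm (Fin n)) (permAction N n)


/-!
Let `J_x = ∑_{i < x} (i x)` be the Jucys–Murphy elements and `Z_k = (N + J_0) ⋯ (N + J_{k-1})`.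
The coefficient of `σ` in `Z_n` is the number of colourings `Fin n → Fin N` fixed by `σ`, which is
the trace of `D(σ)`; hence `tr D(X) = ⟨X, Z_n⟩` for the coefficientwise pairing `⟨·, ·⟩`.

Let `s_k`, `a_k` be the row symmetrizer and column antisymmetrizer of the subtableau formed by the
entries `x < k`, and `F_k = ⟨s_k a_k, Z_k⟩`, so that `F_n = tr D(s_T a_T)`. Passing from `k` to
`k + 1` adds the entry `x = k`: the row and column groups split into cosets of the stabilizer of
`x`, represented by transpositions `(a x)` with `a` earlier in the row or column of `x`; the factor
`N + J_x` moves across the pairing (transpositions are involutions) and through `a_k` (whose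
permutations fix `x` and preserve the entries `< x`). Since `s_k`, `a_k` and `Z_k` only involve
permutations fixing every entry `≥ k`, only the terms of the expansion that fix `x` survive, and a
Garnir relation kills the transpositions `(a b)` with `a` in the row and `b` in the column of `x`.
What is left is `F_{k+1} = (N + c(x)) F_k`, where `c(x)` is the content of the box of `x`. Hence
`F_n = f_T(N)`.
-/

namespace SYT

variable {n : ℕ} (T : SYT n)

theorem rowOf_colOf_spec (x : Fin n) :
    (T.rowOf x, T.colOf x) ∈ T.shape.cells ∧ T.entry (T.rowOf x, T.colOf x) = x + 1 := by
  obtain ⟨c, hc, hcx⟩ := T.bijOn.surjOn (show (x : ℕ) + 1 ∈ Set.Icc 1 n by grind)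
  have hfilter : T.shape.cells.filter (fun d => T.entry d = x + 1) = {c} := by
    ext d
    simp only [Finset.mem_filter, Finset.mem_singleton]
    exact ⟨fun ⟨hd, hdx⟩ => T.bijOn.injOn hd hc (hdx.trans hcx.symm),
      by rintro rfl; exact ⟨hc, hcx⟩⟩
  simp only [rowOf, colOf, hfilter, Finset.sup_singleton]
  exact ⟨hc, hcx⟩

theorem rowOf_colOf_mem_cells (x : Fin n) : (T.rowOf x, T.colOf x) ∈ T.shape.cells :=
  (T.rowOf_colOf_spec x).1

theorem entry_rowOf_colOf (x : Fin n) : T.entry (T.rowOf x, T.colOf x) = x + 1 :=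
  (T.rowOf_colOf_spec x).2

theorem eq_of_rowOf_eq_of_colOf_eq {x y : Fin n} (hr : T.rowOf x = T.rowOf y)
    (hc : T.colOf x = T.colOf y) : x = y := by
  have := T.entry_rowOf_colOf y
  rw [← hr, ← hc, T.entry_rowOf_colOf x] at this
  exact Fin.ext (by omega)

theorem exists_rowOf_colOf_eq {c : ℕ × ℕ} (hc : c ∈ T.shape.cells) :
    ∃ x : Fin n, T.rowOf x = c.1 ∧ T.colOf x = c.2 := by
  obtain ⟨h1, h2⟩ : T.entry c ∈ Set.Icc 1 n := T.bijOn.mapsTo hc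
  let x : Fin n := ⟨T.entry c - 1, by omega⟩
  have := T.bijOn.injOn (T.rowOf_colOf_mem_cells x) hc
    (by rw [T.entry_rowOf_colOf]; show T.entry c - 1 + 1 = _; omega)
  exact ⟨x, congrArg Prod.fst this, congrArg Prod.snd this⟩

theorem lt_iff_colOf_lt {x y : Fin n} (h : T.rowOf x = T.rowOf y) :
    x < y ↔ T.colOf x < T.colOf y := by
  have key : ∀ {x y : Fin n}, T.rowOf x = T.rowOf y → T.colOf x < T.colOf y → x < y := by
    intro x y h hc
    have := T.row_lt _ _ _ hc (T.rowOf_colOf_mem_cells y)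
    rw [T.entry_rowOf_colOf y, ← h, T.entry_rowOf_colOf x] at this
    exact Fin.lt_def.mpr (by omega)
  refine ⟨fun hxy => ?_, key h⟩
  rcases lt_trichotomy (T.colOf x) (T.colOf y) with hc | hc | hc
  · exact hc
  · exact absurd (T.eq_of_rowOf_eq_of_colOf_eq h hc) hxy.ne
  · exact absurd (key h.symm hc) hxy.asymm

theorem lt_iff_rowOf_lt {x y : Fin n} (h : T.colOf x = T.colOf y) :
    x < y ↔ T.rowOf x < T.rowOf y := by
  have key : ∀ {x y : Fin n}, T.colOf x = T.colOf y → T.rowOf x < T.rowOf y → x < y := by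
    intro x y h hr
    have := T.col_lt _ _ _ hr (T.rowOf_colOf_mem_cells y)
    rw [T.entry_rowOf_colOf y, ← h, T.entry_rowOf_colOf x] at this
    exact Fin.lt_def.mpr (by omega)
  refine ⟨fun hxy => ?_, key h⟩
  rcases lt_trichotomy (T.rowOf x) (T.rowOf y) with hr | hr | hr
  · exact hr
  · exact absurd (T.eq_of_rowOf_eq_of_colOf_eq hr h) hxy.ne
  · exact absurd (key h.symm hr) hxy.asymm

theorem prod_content_eq_fPoly (N : ℕ) :
    ∏ x : Fin n, ((N : ℂ) + T.colOf x - T.rowOf x) = fPoly T.shape N := by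
  refine Finset.prod_bij (fun x _ => (T.rowOf x, T.colOf x))
    (fun x _ => T.rowOf_colOf_mem_cells x) (fun x _ y _ h => ?_) (fun c hc => ?_)
    (fun x _ => by ring)
  · exact T.eq_of_rowOf_eq_of_colOf_eq (Prod.ext_iff.mp h).1 (Prod.ext_iff.mp h).2
  · obtain ⟨x, hr, hc⟩ := T.exists_rowOf_colOf_eq hc
    exact ⟨x, Finset.mem_univ x, Prod.ext hr hc⟩

end SYT

open Equiv Finset MonoidAlgebra

section Supported

variable {G : Type*} [Group G]

theorem of_mem_supported {K : Subgroup G} {g : G} (hg : g ∈ K) :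
    of ℂ G g ∈ supported ℂ ℂ (K : Set G) := by
  rw [mem_supported, of_apply, coeff_single]
  intro h hh
  rwa [mem_singleton.mp (Finsupp.support_single_subset hh)]

theorem mul_mem_supported {K : Subgroup G} {X Y : MonoidAlgebra ℂ G}
    (hX : X ∈ supported ℂ ℂ (K : Set G)) (hY : Y ∈ supported ℂ ℂ (K : Set G)) :
    X * Y ∈ supported ℂ ℂ (K : Set G) := by
  intro τ hτ
  obtain ⟨a, ha, b, hb, rfl⟩ := mem_mul.mp (support_coeff_mul_subset X Y hτ)
  exact K.mul_mem (hX ha) (hY hb)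

theorem coeff_mul_of_mul_eq_zero_of_notMem {K : Subgroup G} {X Y : MonoidAlgebra ℂ G} {g τ : G}
    (hX : X ∈ supported ℂ ℂ (K : Set G)) (hY : Y ∈ supported ℂ ℂ (K : Set G)) (hg : g ∉ K)
    (hτ : τ ∈ K) : (X * of ℂ G g * Y).coeff τ = 0 := by
  by_contra hne
  rw [of_apply] at hne
  obtain ⟨_, hag, b, hb, rfl⟩ := mem_mul.mp <|
    (support_coeff_mul_subset _ Y).trans (mul_subset_mul_right
      (support_coeff_mul_single_subset X 1 g)) (Finsupp.mem_support_iff.mpr hne)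
  obtain ⟨a, ha, rfl⟩ := mem_image.mp hag
  exact hg <| (K.mul_mem_cancel_left (hX ha)).mp <| (K.mul_mem_cancel_right (hY hb)).mp hτ

theorem coeff_mul_natCast (X : MonoidAlgebra ℂ G) (N : ℕ) (σ : G) :
    (X * N).coeff σ = N * X.coeff σ := by
  rw [← Nat.cast_comm, ← nsmul_eq_mul, coeff_smul, Finsupp.smul_apply, nsmul_eq_mul]

end Supported

section Pairing

variable {G : Type*} [Fintype G]

noncomputable def pairing : MonoidAlgebra ℂ G →ₗ[ℂ] MonoidAlgebra ℂ G →ₗ[ℂ] ℂ :=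
  LinearMap.mk₂ ℂ (fun X Y => ∑ σ, X.coeff σ * Y.coeff σ)
    (fun _ _ _ => by simp [add_mul, sum_add_distrib])
    (fun _ _ _ => by simp [mul_sum, mul_assoc])
    (fun _ _ _ => by simp [mul_add, sum_add_distrib])
    (fun _ _ _ => by simp [mul_sum, mul_left_comm])

theorem pairing_apply (X Y : MonoidAlgebra ℂ G) :
    pairing X Y = ∑ σ, X.coeff σ * Y.coeff σ := rfl

variable [Group G]

theorem pairing_one_one : pairing (1 : MonoidAlgebra ℂ G) 1 = 1 := by
  rw [pairing_apply, Fintype.sum_eq_single 1 fun σ hσ => by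
    simp [MonoidAlgebra.one_def, Ne.symm hσ], coeff_one_one, mul_one]

theorem pairing_mul_of (X Y : MonoidAlgebra ℂ G) (g : G) :
    pairing X (Y * of ℂ G g) = pairing (X * of ℂ G g⁻¹) Y := by
  simp only [pairing_apply, of_apply, coeff_mul_single_apply, mul_one, inv_inv]
  exact Fintype.sum_equiv (Equiv.mulRight g⁻¹) _ _ fun σ => by simp

theorem pairing_eq_zero_of_supported {K : Subgroup G} {X Y : MonoidAlgebra ℂ G}
    (hX : ∀ τ ∈ K, X.coeff τ = 0) (hY : Y ∈ supported ℂ ℂ (K : Set G)) : pairing X Y = 0 := by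
  refine sum_eq_zero fun τ _ => ?_
  by_cases hτ : τ ∈ K
  · rw [hX τ hτ, zero_mul]
  · rw [mem_supported'.mp hY τ hτ, mul_zero]

noncomputable def symmetrizer (H : Subgroup G) : MonoidAlgebra ℂ G :=
  ∑ σ ∈ univ.filter (· ∈ H), of ℂ G σ

theorem symmetrizer_mul_of {H : Subgroup G} {h : G} (hh : h ∈ H) :
    symmetrizer H * of ℂ G h = symmetrizer H := by
  simp only [symmetrizer, sum_mul, ← map_mul]
  refine sum_nbij' (· * h) (· * h⁻¹) ?_ ?_ ?_ ?_ fun _ _ => rfl <;>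
    simp +contextual [H.mul_mem_cancel_right hh, H.mul_mem_cancel_right (H.inv_mem hh)]

theorem symmetrizer_mem_supported (H : Subgroup G) :
    symmetrizer H ∈ supported ℂ ℂ (H : Set G) :=
  Submodule.sum_mem _ fun _ hσ => of_mem_supported (mem_filter.mp hσ).2

theorem symmetrizer_bot : symmetrizer (⊥ : Subgroup G) = 1 := by
  have : univ.filter (· ∈ (⊥ : Subgroup G)) = {1} := by ext; simp
  rw [symmetrizer, this, sum_singleton, map_one]

end Pairing

def fiberStabilizer {α β : Type*} (f : α → β) : Subgroup (Perm α) where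
  carrier := {σ | ∀ x, f (σ x) = f x}
  mul_mem' {σ τ} hσ hτ x := (hσ (τ x)).trans (hτ x)
  one_mem' _ := rfl
  inv_mem' {σ} hσ x := by simpa using (hσ (σ⁻¹ x)).symm

section Antisymmetrizer

variable {α : Type*} [DecidableEq α]

theorem swap_mem_fiberStabilizer {β : Type*} {f : α → β} {a b : α} (h : f a = f b) :
    swap a b ∈ fiberStabilizer f := fun x => by
  rcases eq_or_ne x a with rfl | hxa
  · rw [swap_apply_left, h]
  rcases eq_or_ne x b with rfl | hxb
  · rw [swap_apply_right, h]
  · rw [swap_apply_of_ne_of_ne hxa hxb]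

theorem sum_insert_swap {x : α} {S : Finset α} (hx : x ∉ S) :
    ∑ a ∈ insert x S, of ℂ (Perm α) (swap a x) = 1 + ∑ a ∈ S, of ℂ (Perm α) (swap a x) := by
  rw [sum_insert hx, swap_self, ← Perm.one_def, map_one]

variable [Fintype α]

noncomputable def antisymmetrizer (H : Subgroup (Perm α)) : MonoidAlgebra ℂ (Perm α) :=
  ∑ σ ∈ univ.filter (· ∈ H), ((Perm.sign σ : ℤ) : ℂ) • of ℂ (Perm α) σ

theorem of_mul_antisymmetrizer {H : Subgroup (Perm α)} {v : Perm α} (hv : v ∈ H) :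
    of ℂ _ v * antisymmetrizer H = ((Perm.sign v : ℤ) : ℂ) • antisymmetrizer H := by
  simp only [antisymmetrizer, mul_sum, smul_sum, mul_smul_comm, ← map_mul]
  refine sum_nbij' (v * ·) (v⁻¹ * ·) ?_ ?_ ?_ ?_ fun σ _ => ?_
  any_goals simp +contextual [H.mul_mem_cancel_left hv, H.mul_mem_cancel_left (H.inv_mem hv)]
  rw [← mul_assoc, ← Int.cast_mul, ← Units.val_mul, Int.units_mul_self, Units.val_one,
    Int.cast_one, one_mul]

theorem antisymmetrizer_mem_supported (H : Subgroup (Perm α)) :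
    antisymmetrizer H ∈ supported ℂ ℂ (H : Set (Perm α)) :=
  Submodule.sum_mem _ fun _ hσ => Submodule.smul_mem _ _ (of_mem_supported (mem_filter.mp hσ).2)

theorem antisymmetrizer_bot : antisymmetrizer (⊥ : Subgroup (Perm α)) = 1 := by
  have : univ.filter (· ∈ (⊥ : Subgroup (Perm α))) = {1} := by ext; simp
  rw [antisymmetrizer, this, sum_singleton, Perm.sign_one, Units.val_one, Int.cast_one, one_smul,
    map_one]

theorem symmetrizer_mul_of_mul_antisymmetrizer_eq_zero {H V : Subgroup (Perm α)}
    {g h v : Perm α} (hh : h ∈ H) (hv : v ∈ V) (hsign : Perm.sign v = -1)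
    (hgv : h * g = g * v) : symmetrizer H * of ℂ _ g * antisymmetrizer V = 0 := by
  set X := symmetrizer H * of ℂ _ g * antisymmetrizer V
  have hX : X = -X :=
    calc X = symmetrizer H * of ℂ _ h * of ℂ _ g * antisymmetrizer V := by
          rw [symmetrizer_mul_of hh]
      _ = symmetrizer H * of ℂ _ g * (of ℂ _ v * antisymmetrizer V) := by
          rw [mul_assoc _ (of ℂ _ h), ← map_mul, hgv, map_mul, ← mul_assoc, mul_assoc]
      _ = -X := by
          rw [of_mul_antisymmetrizer hv, hsign]
          simp [X]
  have h2 : (2 : ℂ) • X = 0 := by rw [two_smul]; nth_rewrite 1 [hX]; exact neg_add_cancel X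
  exact (smul_eq_zero.mp h2).resolve_left two_ne_zero

theorem symmetrizer_eq_mul_sum_swap {H : Subgroup (Perm α)} {x : α} {O : Finset α}
    (hswap : ∀ a ∈ O, swap a x ∈ H) (horbit : ∀ σ ∈ H, σ x ∈ O) :
    symmetrizer H =
      symmetrizer (H ⊓ MulAction.stabilizer (Perm α) x) * ∑ a ∈ O, of ℂ _ (swap a x) := by
  rw [symmetrizer, symmetrizer, sum_mul_sum, ← sum_product']
  simp_rw [← map_mul]
  refine (sum_nbij' (fun p => p.1 * swap p.2 x) (fun σ => (σ * swap (σ⁻¹ x) x, σ⁻¹ x))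
    ?_ ?_ ?_ ?_ fun _ _ => rfl).symm
  · rintro ⟨h, a⟩ hp
    simp only [mem_product, mem_filter, mem_univ, true_and, Subgroup.mem_inf] at hp ⊢
    exact H.mul_mem hp.1.1 (hswap a hp.2)
  · intro σ hσ
    simp only [mem_product, mem_filter, mem_univ, true_and, Subgroup.mem_inf,
      MulAction.mem_stabilizer_iff, Perm.smul_def] at hσ ⊢
    have hO := horbit _ (H.inv_mem hσ)
    exact ⟨⟨H.mul_mem hσ (hswap _ hO), by simp⟩, hO⟩
  · rintro ⟨h, a⟩ hp
    simp only [mem_product, mem_filter, mem_univ, true_and, Subgroup.mem_inf,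
      MulAction.mem_stabilizer_iff, Perm.smul_def] at hp
    have : (h * swap a x)⁻¹ x = a := by
      rw [mul_inv_rev, Perm.mul_apply, Perm.inv_eq_iff_eq.mpr hp.1.2.symm, swap_inv,
        swap_apply_right]
    show (h * swap a x * swap ((h * swap a x)⁻¹ x) x, (h * swap a x)⁻¹ x) = (h, a)
    rw [this, mul_swap_mul_self]
  · intro σ _
    simp

theorem antisymmetrizer_eq_sum_swap_mul {H : Subgroup (Perm α)} {x : α} {O : Finset α}
    (hswap : ∀ a ∈ O, swap a x ∈ H) (horbit : ∀ σ ∈ H, σ x ∈ O) :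
    antisymmetrizer H = (∑ a ∈ O, ((Perm.sign (swap a x) : ℤ) : ℂ) • of ℂ _ (swap a x)) *
      antisymmetrizer (H ⊓ MulAction.stabilizer (Perm α) x) := by
  rw [antisymmetrizer, antisymmetrizer, sum_mul_sum, ← sum_product']
  simp_rw [smul_mul_smul_comm, ← map_mul, ← Int.cast_mul, ← Units.val_mul, ← Perm.sign_mul]
  refine (sum_nbij' (fun p => swap p.1 x * p.2) (fun σ => (σ x, swap (σ x) x * σ))
    ?_ ?_ ?_ ?_ fun _ _ => rfl).symm
  · rintro ⟨a, h⟩ hp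
    simp only [mem_product, mem_filter, mem_univ, true_and, Subgroup.mem_inf] at hp ⊢
    exact H.mul_mem (hswap a hp.1) hp.2.1
  · intro σ hσ
    simp only [mem_product, mem_filter, mem_univ, true_and, Subgroup.mem_inf,
      MulAction.mem_stabilizer_iff, Perm.smul_def] at hσ ⊢
    have hO := horbit _ hσ
    exact ⟨hO, H.mul_mem (hswap _ hO) hσ, by simp⟩
  · rintro ⟨a, h⟩ hp
    simp only [mem_product, mem_filter, mem_univ, true_and, Subgroup.mem_inf,
      MulAction.mem_stabilizer_iff, Perm.smul_def] at hp
    have : (swap a x * h) x = a := by rw [Perm.mul_apply, hp.2.2, swap_apply_right]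
    simp [this, ← mul_assoc]
  · intro σ _
    simp [← mul_assoc]

theorem sum_insert_sign_swap_smul {x : α} {S : Finset α} (hx : x ∉ S) :
    ∑ b ∈ insert x S, ((Perm.sign (swap b x) : ℤ) : ℂ) • of ℂ (Perm α) (swap b x) =
      1 - ∑ b ∈ S, of ℂ (Perm α) (swap b x) := by
  rw [sum_insert hx, swap_self, ← Perm.one_def, map_one, map_one, Units.val_one, Int.cast_one,
    one_smul, sub_eq_add_neg, ← sum_neg_distrib]
  refine congrArg _ (sum_congr rfl fun b hb => ?_)
  rw [Perm.sign_swap (ne_of_mem_of_not_mem hb hx)]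
  simp

end Antisymmetrizer

section FixedColorings

def fixedColorings {α : Type*} [Fintype α] [DecidableEq α] (β : Type*) [Fintype β]
    [DecidableEq β] (σ : Perm α) : Finset (α → β) :=
  univ.filter fun f => f ∘ σ = f

variable {α β : Type*} [Fintype α] [DecidableEq α] [Fintype β] [DecidableEq β]

theorem mem_fixedColorings {σ : Perm α} {f : α → β} :
    f ∈ fixedColorings β σ ↔ ∀ y, f (σ y) = f y := by
  simp [fixedColorings, funext_iff]

theorem card_fixedColorings_one :
    #(fixedColorings β (1 : Perm α)) = Fintype.card β ^ Fintype.card α := by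
  simp [fixedColorings]

/-- Inserting a fixed point `x` of `τ` into the cycle of `κ` glues the free colour of `x` to the
colour of that cycle. -/
theorem card_fixedColorings_eq_mul_swap_mul_card {τ : Perm α} {κ x : α} (hτ : τ x = x)
    (hκ : κ ≠ x) :
    #(fixedColorings β τ) = #(fixedColorings β (τ * swap κ x)) * Fintype.card β := by
  rw [← card_univ, ← card_product]
  have hτκ : τ κ ≠ x := fun h => hκ (τ.injective (h.trans hτ.symm))
  refine card_nbij' (fun f => (Function.update f x (f κ), f x))
    (fun p => Function.update p.1 x p.2) ?_ ?_ ?_ ?_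
  · intro f hf
    simp only [coe_product, Set.mem_prod, mem_coe, mem_fixedColorings, coe_univ, Set.mem_univ,
      and_true] at hf ⊢
    intro y
    rcases eq_or_ne y x with rfl | hy
    · simp [hτκ, hf]
    rcases eq_or_ne y κ with rfl | hyκ
    · simp [hτ, hκ]
    · have : τ y ≠ x := fun h => hy (τ.injective (h.trans hτ.symm))
      simp [swap_apply_of_ne_of_ne hyκ hy, this, hy, hf]
  · rintro ⟨g, c⟩ hg
    simp only [coe_product, Set.mem_prod, mem_coe, mem_fixedColorings, coe_univ, Set.mem_univ,
      and_true] at hg ⊢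
    have hgκ : g κ = g x := by simpa [hτ] using (hg κ).symm
    intro y
    rcases eq_or_ne y x with rfl | hy
    · rw [hτ]
    have : τ y ≠ x := fun h => hy (τ.injective (h.trans hτ.symm))
    rw [Function.update_of_ne this, Function.update_of_ne hy]
    rcases eq_or_ne y κ with rfl | hyκ
    · simpa [hgκ] using hg x
    · simpa [swap_apply_of_ne_of_ne hyκ hy] using hg y
  · intro f _
    simp
  · rintro ⟨g, c⟩ hg
    simp only [coe_product, Set.mem_prod, mem_coe, mem_fixedColorings, coe_univ, Set.mem_univ,
      and_true] at hg
    have hgκ : g κ = g x := by simpa [hτ] using (hg κ).symm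
    simp [hκ, hgκ]

end FixedColorings

section JucysMurphy

variable {n : ℕ}

def fixingFrom (n k : ℕ) : Subgroup (Perm (Fin n)) :=
  fixingSubgroup (Perm (Fin n)) {x : Fin n | k ≤ (x : ℕ)}

theorem mem_fixingFrom {k : ℕ} {σ : Perm (Fin n)} :
    σ ∈ fixingFrom n k ↔ ∀ x : Fin n, k ≤ x → σ x = x := by
  simp [fixingFrom, mem_fixingSubgroup_iff]

theorem fixingFrom_zero : fixingFrom n 0 = ⊥ := by
  ext σ
  simp [mem_fixingFrom, Perm.ext_iff]

theorem fixingFrom_self : fixingFrom n n = ⊤ := by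
  ext σ
  simp only [mem_fixingFrom, Subgroup.mem_top, iff_true]
  exact fun x hx => absurd x.2 (by omega)

theorem fixingFrom_mono {k l : ℕ} (h : k ≤ l) : fixingFrom n k ≤ fixingFrom n l :=
  fun _ hσ => mem_fixingFrom.mpr fun x hx => mem_fixingFrom.mp hσ x (h.trans hx)

theorem val_apply_lt_of_mem_fixingFrom {k : ℕ} {σ : Perm (Fin n)} (hσ : σ ∈ fixingFrom n k)
    {y : Fin n} (hy : (y : ℕ) < k) : (σ y : ℕ) < k := by
  by_contra! h
  have := σ.injective (mem_fixingFrom.mp hσ _ h)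
  omega

theorem swap_mem_fixingFrom {k : ℕ} {a b : Fin n} (ha : (a : ℕ) < k) (hb : (b : ℕ) < k) :
    swap a b ∈ fixingFrom n k :=
  mem_fixingFrom.mpr fun _ hx => swap_apply_of_ne_of_ne (by grind) (by grind)

theorem fixingFrom_succ_inf_stabilizer (x : Fin n) :
    fixingFrom n (x + 1) ⊓ MulAction.stabilizer (Perm (Fin n)) x = fixingFrom n x := by
  ext σ
  simp only [Subgroup.mem_inf, mem_fixingFrom, MulAction.mem_stabilizer_iff, Perm.smul_def]
  refine ⟨fun ⟨h, hx⟩ y hy => ?_, fun h => ⟨fun y hy => h y (by omega), h x le_rfl⟩⟩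
  rcases hy.eq_or_lt with hy | hy
  · rwa [Fin.ext hy] at hx
  · exact h y hy

noncomputable def jucysMurphy (x : Fin n) : MonoidAlgebra ℂ (Perm (Fin n)) :=
  ∑ i ∈ univ.filter (· < x), of ℂ _ (swap i x)

theorem natCast_add_jucysMurphy_mem_supported (N : ℕ) (x : Fin n) :
    ((N : MonoidAlgebra ℂ (Perm (Fin n))) + jucysMurphy x) ∈
      supported ℂ ℂ (fixingFrom n (x + 1) : Set (Perm (Fin n))) := by
  refine Submodule.add_mem _ ?_ (Submodule.sum_mem _ fun i hi => ?_)
  · rw [mem_supported, coeff_natCast]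
    intro g hg
    rw [mem_singleton.mp (Finsupp.support_single_subset hg)]
    exact one_mem _
  · exact of_mem_supported (swap_mem_fixingFrom (by grind) (by omega))

theorem commute_of_jucysMurphy {x : Fin n} {v : Perm (Fin n)} (hv : v ∈ fixingFrom n x) :
    Commute (of ℂ _ v) (jucysMurphy x) := by
  have hvx : v x = x := mem_fixingFrom.mp hv x le_rfl
  simp only [Commute, SemiconjBy, jucysMurphy, mul_sum, sum_mul, ← map_mul]
  refine sum_nbij' (v ·) (v⁻¹ ·) ?_ ?_ ?_ ?_ fun i _ => ?_
  · intro i hi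
    simp only [mem_filter, mem_univ, true_and, Fin.lt_def] at hi ⊢
    exact val_apply_lt_of_mem_fixingFrom hv hi
  · intro i hi
    simp only [mem_filter, mem_univ, true_and, Fin.lt_def] at hi ⊢
    exact val_apply_lt_of_mem_fixingFrom (inv_mem hv) hi
  · simp
  · simp
  · rw [mul_swap_eq_swap_mul, hvx]

theorem coeff_mul_natCast_add_jucysMurphy (N : ℕ) (X : MonoidAlgebra ℂ (Perm (Fin n)))
    (x : Fin n) (σ : Perm (Fin n)) :
    (X * (N + jucysMurphy x)).coeff σ =
      N * X.coeff σ + ∑ i ∈ univ.filter (· < x), X.coeff (σ * swap i x) := by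
  simp [mul_add, jucysMurphy, mul_sum, coeff_sum, of_apply, coeff_mul_natCast]

theorem pairing_mul_natCast_add_jucysMurphy (N : ℕ) (X Y : MonoidAlgebra ℂ (Perm (Fin n)))
    (x : Fin n) :
    pairing X (Y * ((N : MonoidAlgebra ℂ (Perm (Fin n))) + jucysMurphy x)) =
      pairing (X * ((N : MonoidAlgebra ℂ (Perm (Fin n))) + jucysMurphy x)) Y := by
  simp only [mul_add, map_add, LinearMap.add_apply, jucysMurphy, mul_sum, map_sum,
    LinearMap.coe_sum, Finset.sum_apply, pairing_mul_of, swap_inv, ← nsmul_eq_mul',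
    map_nsmul, LinearMap.smul_apply]

noncomputable def jucysMurphyProduct (n N : ℕ) : ℕ → MonoidAlgebra ℂ (Perm (Fin n))
  | 0 => 1
  | k + 1 =>
    if h : k < n then jucysMurphyProduct n N k * (N + jucysMurphy ⟨k, h⟩)
    else jucysMurphyProduct n N k

theorem jucysMurphyProduct_succ (N : ℕ) (x : Fin n) :
    jucysMurphyProduct n N (x + 1) = jucysMurphyProduct n N x * (N + jucysMurphy x) := by
  simp [jucysMurphyProduct, x.2]

theorem jucysMurphyProduct_mem_supported (N k : ℕ) :
    jucysMurphyProduct n N k ∈ supported ℂ ℂ (fixingFrom n k : Set (Perm (Fin n))) := by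
  induction k with
  | zero => exact of_mem_supported (G := Perm (Fin n)) (one_mem _)
  | succ k ih =>
    have ih' := supported_mono (R := ℂ) (S := ℂ)
      (SetLike.coe_subset_coe.mpr (fixingFrom_mono (n := n) k.le_succ)) ih
    by_cases hk : k < n
    · simpa [jucysMurphyProduct, hk] using
        mul_mem_supported ih' (natCast_add_jucysMurphy_mem_supported N ⟨k, hk⟩)
    · simpa [jucysMurphyProduct, hk] using ih'

theorem coeff_jucysMurphyProduct_succ_of_apply_eq (N : ℕ) {x : Fin n} {σ : Perm (Fin n)}
    (hσx : σ x = x) :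
    (jucysMurphyProduct n N (x + 1)).coeff σ = N * (jucysMurphyProduct n N x).coeff σ := by
  rw [jucysMurphyProduct_succ, coeff_mul_natCast_add_jucysMurphy, add_eq_left]
  refine sum_eq_zero fun i hi => mem_supported'.mp (jucysMurphyProduct_mem_supported N x) _
    fun h => (mem_filter.mp hi).2.ne (σ.injective ?_)
  simpa [hσx] using mem_fixingFrom.mp h x le_rfl

theorem coeff_jucysMurphyProduct_succ_of_apply_ne (N : ℕ) {x : Fin n} {σ : Perm (Fin n)}
    (hσ : σ ∈ fixingFrom n (x + 1)) (hσx : σ x ≠ x) :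
    (jucysMurphyProduct n N (x + 1)).coeff σ =
      (jucysMurphyProduct n N x).coeff (σ * swap (σ⁻¹ x) x) := by
  have hZ : ∀ g : Perm (Fin n), g x ≠ x → (jucysMurphyProduct n N x).coeff g = 0 := fun g hg =>
    mem_supported'.mp (jucysMurphyProduct_mem_supported N x) g
      fun hg' => hg (mem_fixingFrom.mp hg' x le_rfl)
  have hκ : σ⁻¹ x < x := by
    have h1 := val_apply_lt_of_mem_fixingFrom (inv_mem hσ) (Nat.lt_succ_self x)
    have h2 : σ⁻¹ x ≠ x := fun h => hσx (Perm.inv_eq_iff_eq.mp h).symm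
    exact lt_of_le_of_ne (Fin.le_def.mpr (by omega)) h2
  rw [jucysMurphyProduct_succ, coeff_mul_natCast_add_jucysMurphy, hZ σ hσx, mul_zero, zero_add]
  refine sum_eq_single_of_mem (σ⁻¹ x) (mem_filter.mpr ⟨mem_univ _, hκ⟩) fun i _ hi => hZ _ ?_
  rw [Perm.mul_apply, swap_apply_right]
  exact fun h => hi (Perm.eq_inv_iff_eq.mpr h)

/-- The identity `#(fixedColorings σ) = Z_k(σ) N ^ (n - k)`, multiplied by `N ^ k` so that neither
truncated subtraction nor division by `N` occurs. -/
theorem card_fixedColorings_mul_pow {N k : ℕ} (hk : k ≤ n) {σ : Perm (Fin n)}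
    (hσ : σ ∈ fixingFrom n k) :
    (#(fixedColorings (Fin N) σ) * N ^ k : ℂ) = (jucysMurphyProduct n N k).coeff σ * N ^ n := by
  induction k generalizing σ with
  | zero =>
    rw [fixingFrom_zero, Subgroup.mem_bot] at hσ
    subst hσ
    simp [card_fixedColorings_one, jucysMurphyProduct]
  | succ k ih =>
    let x : Fin n := ⟨k, hk⟩
    rcases eq_or_ne (σ x) x with hσx | hσx
    · have hσk : σ ∈ fixingFrom n k := by
        rw [← fixingFrom_succ_inf_stabilizer x]
        exact ⟨hσ, hσx⟩
      rw [coeff_jucysMurphyProduct_succ_of_apply_eq (x := x) N hσx, pow_succ, ← mul_assoc,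
        ih (by omega) hσk]
      ring
    · set τ := σ * swap (σ⁻¹ x) x
      have hτx : τ x = x := by simp [τ]
      have hτ : τ ∈ fixingFrom n k := by
        rw [← fixingFrom_succ_inf_stabilizer x]
        refine ⟨mul_mem hσ (swap_mem_fixingFrom ?_ (by simp [x])), hτx⟩
        exact val_apply_lt_of_mem_fixingFrom (inv_mem hσ) (by simp [x])
      have hcard := card_fixedColorings_eq_mul_swap_mul_card (β := Fin N) hτx
        fun h => hσx (Perm.inv_eq_iff_eq.mp h).symm
      rw [show τ * swap (σ⁻¹ x) x = σ by simp [τ], Fintype.card_fin] at hcard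
      rw [coeff_jucysMurphyProduct_succ_of_apply_ne (x := x) N hσ hσx, ← ih (by omega) hτ, hcard]
      push_cast
      ring

theorem coeff_jucysMurphyProduct {N : ℕ} (hN : 1 ≤ N) (σ : Perm (Fin n)) :
    (jucysMurphyProduct n N n).coeff σ = #(fixedColorings (Fin N) σ) := by
  have h := card_fixedColorings_mul_pow (N := N) le_rfl
    (fixingFrom_self (n := n) ▸ Subgroup.mem_top σ)
  have hN' : (N : ℂ) ^ n ≠ 0 := pow_ne_zero _ (Nat.cast_ne_zero.mpr (by omega))
  exact (mul_right_cancel₀ hN' h).symm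

end JucysMurphy

theorem trace_permAction (N n : ℕ) (σ : Perm (Fin n)) :
    LinearMap.trace ℂ (TensorPow N n) (permAction N n σ) = #(fixedColorings (Fin N) σ) := by
  let b := (EuclideanSpace.basisFun (Fin n → Fin N) ℂ).toBasis
  have hdiag : ∀ f, (LinearMap.toMatrix b b (permAction N n σ)).diag f =
      if f ∈ fixedColorings (Fin N) σ then 1 else 0 := by
    intro f
    rw [Matrix.diag, LinearMap.toMatrix_apply, OrthonormalBasis.coe_toBasis,
      OrthonormalBasis.coe_toBasis_repr_apply, EuclideanSpace.basisFun_repr,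
      EuclideanSpace.basisFun_apply]
    show EuclideanSpace.single f (1 : ℂ) (f ∘ σ) = _
    simp [PiLp.single_apply, fixedColorings]
  rw [LinearMap.trace_eq_matrix_trace ℂ b, Matrix.trace, sum_congr rfl fun f _ => hdiag f,
    sum_boole]
  simp

theorem trace_Dmap_eq_pairing {N n : ℕ} (hN : 1 ≤ N) (X : MonoidAlgebra ℂ (Perm (Fin n))) :
    LinearMap.trace ℂ (TensorPow N n) (Dmap N n X) = pairing X (jucysMurphyProduct n N n) := by
  rw [Dmap, lift_apply, Finsupp.sum, map_sum, sum_subset (subset_univ X.coeff.support)]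
  · simp [trace_permAction, pairing_apply, coeff_jucysMurphyProduct hN]
  · intro σ _ hσ
    simp [Finsupp.notMem_support_iff.mp hσ]

namespace SYT

variable {n : ℕ} (T : SYT n)

def rowGroupBelow (k : ℕ) : Subgroup (Perm (Fin n)) := fiberStabilizer T.rowOf ⊓ fixingFrom n k

def colGroupBelow (k : ℕ) : Subgroup (Perm (Fin n)) := fiberStabilizer T.colOf ⊓ fixingFrom n k

def earlierInRow (x : Fin n) : Finset (Fin n) :=
  univ.filter fun a => a < x ∧ T.rowOf a = T.rowOf x

def earlierInCol (x : Fin n) : Finset (Fin n) :=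
  univ.filter fun b => b < x ∧ T.colOf b = T.colOf x

theorem card_earlierInRow (x : Fin n) : #(T.earlierInRow x) = T.colOf x := by
  rw [← card_range (T.colOf x)]
  refine card_bij (fun a _ => T.colOf a) (fun a ha => ?_) (fun a ha b hb hab => ?_)
    (fun j hj => ?_)
  · simp only [earlierInRow, mem_filter, mem_univ, true_and] at ha
    exact mem_range.mpr ((T.lt_iff_colOf_lt ha.2).mp ha.1)
  · simp only [earlierInRow, mem_filter, mem_univ, true_and] at ha hb
    exact T.eq_of_rowOf_eq_of_colOf_eq (ha.2.trans hb.2.symm) hab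
  · obtain ⟨y, hyr, hyc⟩ := T.exists_rowOf_colOf_eq
      (T.shape.up_left_mem le_rfl (mem_range.mp hj).le (T.rowOf_colOf_mem_cells x))
    refine ⟨y, ?_, hyc⟩
    simp only [earlierInRow, mem_filter, mem_univ, true_and]
    exact ⟨(T.lt_iff_colOf_lt hyr).mpr (hyc ▸ mem_range.mp hj), hyr⟩

theorem card_earlierInCol (x : Fin n) : #(T.earlierInCol x) = T.rowOf x := by
  rw [← card_range (T.rowOf x)]
  refine card_bij (fun b _ => T.rowOf b) (fun b hb => ?_) (fun a ha b hb hab => ?_)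
    (fun i hi => ?_)
  · simp only [earlierInCol, mem_filter, mem_univ, true_and] at hb
    exact mem_range.mpr ((T.lt_iff_rowOf_lt hb.2).mp hb.1)
  · simp only [earlierInCol, mem_filter, mem_univ, true_and] at ha hb
    exact T.eq_of_rowOf_eq_of_colOf_eq hab (ha.2.trans hb.2.symm)
  · obtain ⟨y, hyr, hyc⟩ := T.exists_rowOf_colOf_eq
      (T.shape.up_left_mem (mem_range.mp hi).le le_rfl (T.rowOf_colOf_mem_cells x))
    refine ⟨y, ?_, hyr⟩
    simp only [earlierInCol, mem_filter, mem_univ, true_and]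
    exact ⟨(T.lt_iff_rowOf_lt hyc).mpr (hyr ▸ mem_range.mp hi), hyc⟩

theorem ne_of_mem_earlierInRow_of_mem_earlierInCol {x a b : Fin n} (ha : a ∈ T.earlierInRow x)
    (hb : b ∈ T.earlierInCol x) : a ≠ b := by
  simp only [earlierInRow, earlierInCol, mem_filter, mem_univ, true_and] at ha hb
  rintro rfl
  exact ha.1.ne (T.eq_of_rowOf_eq_of_colOf_eq ha.2 hb.2)

theorem mem_insert_earlierInRow {x a : Fin n} :
    a ∈ insert x (T.earlierInRow x) ↔ (a : ℕ) < x + 1 ∧ T.rowOf a = T.rowOf x := by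
  simp only [earlierInRow, mem_insert, mem_filter, mem_univ, true_and]
  constructor
  · rintro (rfl | ⟨h, hr⟩)
    · exact ⟨by omega, rfl⟩
    · exact ⟨by omega, hr⟩
  · rintro ⟨h, hr⟩
    rcases eq_or_ne a x with rfl | hax
    · exact Or.inl rfl
    · exact Or.inr ⟨by omega, hr⟩

theorem mem_insert_earlierInCol {x b : Fin n} :
    b ∈ insert x (T.earlierInCol x) ↔ (b : ℕ) < x + 1 ∧ T.colOf b = T.colOf x := by
  simp only [earlierInCol, mem_insert, mem_filter, mem_univ, true_and]
  constructor
  · rintro (rfl | ⟨h, hc⟩)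
    · exact ⟨by omega, rfl⟩
    · exact ⟨by omega, hc⟩
  · rintro ⟨h, hc⟩
    rcases eq_or_ne b x with rfl | hbx
    · exact Or.inl rfl
    · exact Or.inr ⟨by omega, hc⟩

theorem symmetrizer_rowGroupBelow_succ (x : Fin n) :
    symmetrizer (T.rowGroupBelow (x + 1)) =
      symmetrizer (T.rowGroupBelow x) * ∑ a ∈ insert x (T.earlierInRow x), of ℂ _ (swap a x) := by
  rw [symmetrizer_eq_mul_sum_swap (x := x), rowGroupBelow, rowGroupBelow, inf_assoc,
    fixingFrom_succ_inf_stabilizer]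
  · intro a ha
    obtain ⟨hax, hr⟩ := T.mem_insert_earlierInRow.mp ha
    exact ⟨swap_mem_fiberStabilizer hr, swap_mem_fixingFrom hax (by omega)⟩
  · intro σ hσ
    exact T.mem_insert_earlierInRow.mpr
      ⟨val_apply_lt_of_mem_fixingFrom hσ.2 (by omega), hσ.1 x⟩

theorem antisymmetrizer_colGroupBelow_succ (x : Fin n) :
    antisymmetrizer (T.colGroupBelow (x + 1)) =
      (∑ b ∈ insert x (T.earlierInCol x), ((Perm.sign (swap b x) : ℤ) : ℂ) • of ℂ _ (swap b x)) *
        antisymmetrizer (T.colGroupBelow x) := by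
  rw [antisymmetrizer_eq_sum_swap_mul (x := x), colGroupBelow, colGroupBelow, inf_assoc,
    fixingFrom_succ_inf_stabilizer]
  · intro b hb
    obtain ⟨hbx, hc⟩ := T.mem_insert_earlierInCol.mp hb
    exact ⟨swap_mem_fiberStabilizer hc, swap_mem_fixingFrom hbx (by omega)⟩
  · intro σ hσ
    exact T.mem_insert_earlierInCol.mpr
      ⟨val_apply_lt_of_mem_fixingFrom hσ.2 (by omega), hσ.1 x⟩

theorem commute_antisymmetrizer_natCast_add_jucysMurphy (N : ℕ) (x : Fin n) :
    Commute (antisymmetrizer (T.colGroupBelow x)) (N + jucysMurphy x) :=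
  Commute.sum_left _ _ _ fun _ hv => ((Nat.cast_commute N _).symm.add_right
    (commute_of_jucysMurphy (mem_filter.mp hv).2.2)).smul_left _

/-- The Garnir relation: for `y` in the box at the row of `b` and the column of `a`, the
transposition `(y b)` is horizontal, `(y a)` is vertical, and `(y b) (a b) = (a b) (y a)`. -/
theorem symmetrizer_mul_swap_mul_antisymmetrizer_eq_zero {x a b : Fin n}
    (ha : a ∈ T.earlierInRow x) (hb : b ∈ T.earlierInCol x) :
    symmetrizer (T.rowGroupBelow x) * of ℂ _ (swap a b) * antisymmetrizer (T.colGroupBelow x) =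
      0 := by
  have hab := T.ne_of_mem_earlierInRow_of_mem_earlierInCol ha hb
  simp only [earlierInRow, earlierInCol, mem_filter, mem_univ, true_and] at ha hb
  have hca := (T.lt_iff_colOf_lt ha.2).mp ha.1
  have hrb := (T.lt_iff_rowOf_lt hb.2).mp hb.1
  obtain ⟨y, hyr, hyc⟩ : ∃ y, T.rowOf y = T.rowOf b ∧ T.colOf y = T.colOf a :=
    T.exists_rowOf_colOf_eq (T.shape.up_left_mem hrb.le hca.le (T.rowOf_colOf_mem_cells x))
  have hyb : y < b := (T.lt_iff_colOf_lt hyr).mpr (by rw [hyc, hb.2]; exact hca)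
  have hya : y < a := (T.lt_iff_rowOf_lt hyc).mpr (by rw [hyr, ha.2]; exact hrb)
  refine symmetrizer_mul_of_mul_antisymmetrizer_eq_zero (h := swap y b) (v := swap y a)
    ⟨swap_mem_fiberStabilizer hyr, swap_mem_fixingFrom (by omega) (by omega)⟩
    ⟨swap_mem_fiberStabilizer hyc, swap_mem_fixingFrom (by omega) (by omega)⟩
    (Perm.sign_swap hya.ne) ?_
  calc swap y b * swap a b = swap a b * swap y a * swap a b * swap a b := by
        rw [swap_mul_swap_mul_swap hya.ne hyb.ne, swap_comm]
    _ = swap a b * swap y a := mul_swap_mul_self _ _ _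

noncomputable def sandwichPairing (N k : ℕ) : MonoidAlgebra ℂ (Perm (Fin n)) →ₗ[ℂ] ℂ :=
  pairing.flip (jucysMurphyProduct n N k) ∘ₗ
    LinearMap.mulLeft ℂ (symmetrizer (T.rowGroupBelow k)) ∘ₗ
      LinearMap.mulRight ℂ (antisymmetrizer (T.colGroupBelow k))

theorem sandwichPairing_apply (N k : ℕ) (Y : MonoidAlgebra ℂ (Perm (Fin n))) :
    T.sandwichPairing N k Y = pairing (symmetrizer (T.rowGroupBelow k) * Y *
      antisymmetrizer (T.colGroupBelow k)) (jucysMurphyProduct n N k) := by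
  simp [sandwichPairing, mul_assoc]

theorem sandwichPairing_zero_one (N : ℕ) : T.sandwichPairing N 0 1 = 1 := by
  simp [sandwichPairing_apply, rowGroupBelow, colGroupBelow, fixingFrom_zero, symmetrizer_bot,
    antisymmetrizer_bot, jucysMurphyProduct, pairing_one_one]

theorem sandwichPairing_self_one (N : ℕ) :
    T.sandwichPairing N n 1 = pairing (T.rowSym * T.colAntisym) (jucysMurphyProduct n N n) := by
  rw [sandwichPairing_apply, rowGroupBelow, colGroupBelow, fixingFrom_self, inf_top_eq, inf_top_eq,
    mul_one]
  rfl

theorem sandwichPairing_of_notMem (N k : ℕ) {g : Perm (Fin n)} (hg : g ∉ fixingFrom n k) :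
    T.sandwichPairing N k (of ℂ _ g) = 0 := by
  rw [sandwichPairing_apply]
  refine pairing_eq_zero_of_supported
    (fun τ hτ => coeff_mul_of_mul_eq_zero_of_notMem ?_ ?_ hg hτ)
    (jucysMurphyProduct_mem_supported N k)
  · exact supported_mono (SetLike.coe_subset_coe.mpr inf_le_right) (symmetrizer_mem_supported _)
  · exact supported_mono (SetLike.coe_subset_coe.mpr inf_le_right)
      (antisymmetrizer_mem_supported _)

theorem sandwichPairing_succ_one (N : ℕ) (x : Fin n) :
    T.sandwichPairing N (x + 1) 1 = T.sandwichPairing N x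
      ((∑ a ∈ insert x (T.earlierInRow x), of ℂ _ (swap a x)) *
        (∑ b ∈ insert x (T.earlierInCol x), ((Perm.sign (swap b x) : ℤ) : ℂ) • of ℂ _ (swap b x)) *
          (N + jucysMurphy x)) := by
  rw [sandwichPairing_apply, mul_one, jucysMurphyProduct_succ,
    pairing_mul_natCast_add_jucysMurphy, symmetrizer_rowGroupBelow_succ,
    antisymmetrizer_colGroupBelow_succ, sandwichPairing_apply]
  simp only [mul_assoc, (T.commute_antisymmetrizer_natCast_add_jucysMurphy N x).eq]

variable (N : ℕ) {x : Fin n}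

theorem sandwichPairing_of_apply_ne {g : Perm (Fin n)} (hg : g x ≠ x) :
    T.sandwichPairing N x (of ℂ _ g) = 0 :=
  T.sandwichPairing_of_notMem N x fun h => hg (mem_fixingFrom.mp h x le_rfl)

theorem sandwichPairing_sum_swap {S : Finset (Fin n)} (hS : ∀ a ∈ S, a ≠ x) :
    T.sandwichPairing N x (∑ a ∈ S, of ℂ _ (swap a x)) = 0 := by
  rw [map_sum]
  exact sum_eq_zero fun a ha => T.sandwichPairing_of_apply_ne N (by simpa using hS a ha)

theorem sandwichPairing_swap_mul_swap {a i : Fin n} (hi : i ≠ x) :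
    T.sandwichPairing N x (of ℂ _ (swap a x * swap i x)) =
      if i = a then T.sandwichPairing N x 1 else 0 := by
  split_ifs with hia
  · rw [hia, swap_mul_self, map_one]
  · exact T.sandwichPairing_of_apply_ne N (by simpa [swap_apply_of_ne_of_ne hia hi] using hi)

theorem sandwichPairing_sum_swap_mul_jucysMurphy {S : Finset (Fin n)} (hS : ∀ a ∈ S, a < x) :
    T.sandwichPairing N x ((∑ a ∈ S, of ℂ _ (swap a x)) * jucysMurphy x) =
      #S * T.sandwichPairing N x 1 := by
  simp only [jucysMurphy, sum_mul_sum, ← map_mul, map_sum]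
  rw [sum_congr rfl fun a ha => sum_congr rfl fun i hi =>
    T.sandwichPairing_swap_mul_swap N (mem_filter.mp hi).2.ne]
  simp only [sum_ite_eq', mem_filter, mem_univ, true_and]
  rw [sum_congr rfl fun a ha => if_pos (hS a ha), sum_const, nsmul_eq_mul]

theorem sandwichPairing_earlierInRow_mul_earlierInCol :
    T.sandwichPairing N x ((∑ a ∈ T.earlierInRow x, of ℂ _ (swap a x)) *
      ∑ b ∈ T.earlierInCol x, of ℂ _ (swap b x)) = 0 := by
  simp only [sum_mul_sum, ← map_mul, map_sum]
  refine sum_eq_zero fun a ha => sum_eq_zero fun b hb => ?_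
  rw [T.sandwichPairing_swap_mul_swap N (mem_filter.mp hb).2.1.ne,
    if_neg (T.ne_of_mem_earlierInRow_of_mem_earlierInCol ha hb).symm]

theorem sandwichPairing_earlierInRow_mul_earlierInCol_mul_jucysMurphy :
    T.sandwichPairing N x ((∑ a ∈ T.earlierInRow x, of ℂ _ (swap a x)) *
      (∑ b ∈ T.earlierInCol x, of ℂ _ (swap b x)) * jucysMurphy x) = 0 := by
  simp only [jucysMurphy, sum_mul, mul_sum, ← map_mul, map_sum]
  refine sum_eq_zero fun i hi => sum_eq_zero fun b hb => sum_eq_zero fun a ha => ?_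
  have hab := T.ne_of_mem_earlierInRow_of_mem_earlierInCol ha hb
  have hax : a ≠ x := (mem_filter.mp ha).2.1.ne
  have hbx : b ≠ x := (mem_filter.mp hb).2.1.ne
  have hix : i ≠ x := (mem_filter.mp hi).2.ne
  rcases eq_or_ne i a with rfl | hia
  · rw [swap_comm i x, swap_mul_swap_mul_swap hbx hab.symm, sandwichPairing_apply,
      symmetrizer_mul_swap_mul_antisymmetrizer_eq_zero T ha hb, map_zero, LinearMap.zero_apply]
  · refine T.sandwichPairing_of_apply_ne N ?_
    rcases eq_or_ne i b with rfl | hib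
    · simp [hax]
    · simpa [swap_apply_of_ne_of_ne hib hix, swap_apply_of_ne_of_ne hia hix] using hix

theorem sandwichPairing_succ_one_eq (x : Fin n) :
    T.sandwichPairing N (x + 1) 1 = (N + T.colOf x - T.rowOf x) * T.sandwichPairing N x 1 := by
  have hR : ∀ a ∈ T.earlierInRow x, a < x := fun a ha => (mem_filter.mp ha).2.1
  have hC : ∀ b ∈ T.earlierInCol x, b < x := fun b hb => (mem_filter.mp hb).2.1
  set P := ∑ a ∈ T.earlierInRow x, of ℂ _ (swap a x)
  set Q := ∑ b ∈ T.earlierInCol x, of ℂ _ (swap b x)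
  set J := jucysMurphy x
  have expand : (1 + P) * (1 - Q) * ((N : MonoidAlgebra ℂ (Perm (Fin n))) + J) =
      N • (1 + P - Q - P * Q) + (J + P * J - Q * J - P * Q * J) := by
    rw [mul_add, ← nsmul_eq_mul']
    congr 1 <;> noncomm_ring
  have hPJ : T.sandwichPairing N x (P * J) = T.colOf x * T.sandwichPairing N x 1 := by
    rw [← card_earlierInRow]
    exact T.sandwichPairing_sum_swap_mul_jucysMurphy N hR
  have hQJ : T.sandwichPairing N x (Q * J) = T.rowOf x * T.sandwichPairing N x 1 := by
    rw [← card_earlierInCol]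
    exact T.sandwichPairing_sum_swap_mul_jucysMurphy N hC
  have hP : T.sandwichPairing N x P = 0 := T.sandwichPairing_sum_swap N fun a ha => (hR a ha).ne
  have hQ : T.sandwichPairing N x Q = 0 := T.sandwichPairing_sum_swap N fun b hb => (hC b hb).ne
  have hJ : T.sandwichPairing N x J = 0 :=
    T.sandwichPairing_sum_swap N fun i hi => (mem_filter.mp hi).2.ne
  have hPQ : T.sandwichPairing N x (P * Q) = 0 := T.sandwichPairing_earlierInRow_mul_earlierInCol N
  have hPQJ : T.sandwichPairing N x (P * Q * J) = 0 :=
    T.sandwichPairing_earlierInRow_mul_earlierInCol_mul_jucysMurphy N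
  rw [sandwichPairing_succ_one, sum_insert_swap fun h => (hR x h).false,
    sum_insert_sign_swap_smul fun h => (hC x h).false, expand, map_add, map_nsmul]
  simp only [map_add, map_sub, nsmul_eq_mul, hP, hQ, hJ, hPQ, hPQJ, hPJ, hQJ]
  ring

theorem sandwichPairing_one_eq_prod {k : ℕ} (hk : k ≤ n) :
    T.sandwichPairing N k 1 =
      ∏ x ∈ univ.filter (fun x : Fin n => (x : ℕ) < k), ((N : ℂ) + T.colOf x - T.rowOf x) := by
  induction k with
  | zero => simp [sandwichPairing_zero_one]
  | succ k ih =>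
    let x : Fin n := ⟨k, hk⟩
    have hfilter : univ.filter (fun y : Fin n => (y : ℕ) < k + 1) =
        insert x (univ.filter fun y : Fin n => (y : ℕ) < k) := by
      ext y
      simp only [mem_filter, mem_univ, true_and, mem_insert, Fin.ext_iff, x]
      omega
    rw [hfilter, prod_insert (by simp [x]), ← ih (by omega)]
    exact T.sandwichPairing_succ_one_eq N x

end SYT

/-- **Dimension formula.**  Let `T` be a standard Young tableau with `n` boxes and let
`N ≥ 1`.  The trace of the operator `D(Y_T)` on `(ℂ^N)^{⊗n}` equals `f_T(N)/H(T)`,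
where `f_T(N) = ∏_{(j,k)} (N + k − j)` over the boxes of the shape of `T` in row `j`
and column `k`, and `H(T)` is the product of hook lengths. -/
theorem trace_youngOp {n N : ℕ} (hN : 1 ≤ N) (T : SYT n) :
    LinearMap.trace ℂ (TensorPow N n) (Dmap N n (youngOp T)) =
      fPoly T.shape N / (hookProd T.shape : ℂ) := by
  calc LinearMap.trace ℂ (TensorPow N n) (Dmap N n (youngOp T))
      = (hookProd T.shape : ℂ)⁻¹ *
          pairing (T.rowSym * T.colAntisym) (jucysMurphyProduct n N n) := by
        rw [youngOp, map_smul, map_smul, trace_Dmap_eq_pairing hN, smul_eq_mul]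
    _ = (hookProd T.shape : ℂ)⁻¹ * ∏ x : Fin n, ((N : ℂ) + T.colOf x - T.rowOf x) := by
        rw [← T.sandwichPairing_self_one, T.sandwichPairing_one_eq_prod N le_rfl,
          filter_true_of_mem fun x _ => x.2]
    _ = fPoly T.shape N / (hookProd T.shape : ℂ) := by
        rw [T.prod_content_eq_fPoly, inv_mul_eq_div]
end

section
/- Let G be a group and W a finite-dimensional complex inner product space carrying a unitary representation of G. Let T: W → W be a G-equivariant linear projection (T² = T) whose image U is an irreducible invariant subspace. Let P: W → W be a self-adjoint G-equivariant projection (P² = P = P†) such that the image of P contains exactly one irreducible invariant subspace Ũ isomorphic to U as a representation of G (i.e., the isotypic component of im P for the isomorphism class of U is irreducible). If P T P ≠ 0, then P T P is a nonzero scalar multiple of the orthogonal projection of W onto Ũ. -/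
variable {G : Type*} [Group G] {W : Type*} [NormedAddCommGroup W]
  [InnerProductSpace ℂ W] [FiniteDimensional ℂ W]

/-- A subspace `p` is invariant under the representation `ρ` if it is stable under the
action of every group element. -/
def IsInvariantSubspace (ρ : G →* (W →ₗ[ℂ] W)) (p : Submodule ℂ W) : Prop :=
  ∀ g : G, ∀ x ∈ p, ρ g x ∈ p

/-- An invariant subspace is irreducible if it is nonzero and contains no proper nonzero
invariant subspace. -/
def IsIrreducibleInvariant (ρ : G →* (W →ₗ[ℂ] W)) (p : Submodule ℂ W) : Prop :=
  IsInvariantSubspace ρ p ∧ p ≠ ⊥ ∧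
    ∀ q : Submodule ℂ W, q ≤ p → IsInvariantSubspace ρ q → q = ⊥ ∨ q = p

/-- Two invariant subspaces are isomorphic as representations of `G` if there is a
`G`-equivariant linear isomorphism between them. -/
def RepIso (ρ : G →* (W →ₗ[ℂ] W)) (p q : Submodule ℂ W) : Prop :=
  ∃ e : p ≃ₗ[ℂ] q, ∀ (g : G) (x : p) (hx : ρ g (x : W) ∈ p),
    ((e ⟨ρ g (x : W), hx⟩ : q) : W) = ρ g ((e x : W))


/-! The sandwich `S = P T P` is equivariant with range inside `P(U)`, and `P` is injective on the
irreducible `U` (else `S = 0`), so `P(U) ≅ U` is the unique copy `Ũ` of `U` in `im P`.  The adjoint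
`S† = P T† P` is equivariant for the unitary representation and maps `Ũ` into `im P`; its image of
`Ũ` is zero or another copy of `U` in `im P`, so `S†` preserves `Ũ` and acts there by a scalar `d`
(Schur).  Then `⟪w, S x⟫ = ⟪S† w, x⟫ = d̄ ⟪w, x⟫` for `w ∈ Ũ`, which says `S = d̄ • proj_Ũ`. -/

open LinearMap Submodule

open scoped InnerProductSpace

def IsEquivariant (ρ : G →* (W →ₗ[ℂ] W)) (A : W →ₗ[ℂ] W) : Prop :=
  ∀ g : G, ρ g ∘ₗ A = A ∘ₗ ρ g

section

variable {ρ : G →* (W →ₗ[ℂ] W)} {A B : W →ₗ[ℂ] W} {p q r : Submodule ℂ W}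

omit [FiniteDimensional ℂ W]

theorem IsEquivariant.apply_comm (hA : IsEquivariant ρ A) (g : G) (x : W) :
    ρ g (A x) = A (ρ g x) :=
  LinearMap.congr_fun (hA g) x

theorem IsEquivariant.comp (hA : IsEquivariant ρ A) (hB : IsEquivariant ρ B) :
    IsEquivariant ρ (A ∘ₗ B) := fun g => by
  rw [← comp_assoc, hA g, comp_assoc, hB g, comp_assoc]

theorem IsInvariantSubspace.map (hp : IsInvariantSubspace ρ p) (hA : IsEquivariant ρ A) :
    IsInvariantSubspace ρ (p.map A) := by
  rintro g _ ⟨x, hx, rfl⟩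
  exact ⟨ρ g x, hp g x hx, (hA.apply_comm g x).symm⟩

theorem IsInvariantSubspace.comap (hq : IsInvariantSubspace ρ q) (hA : IsEquivariant ρ A) :
    IsInvariantSubspace ρ (q.comap A) := fun g x hx => by
  rw [mem_comap, ← hA.apply_comm]
  exact hq g _ hx

theorem IsInvariantSubspace.inf (hp : IsInvariantSubspace ρ p) (hq : IsInvariantSubspace ρ q) :
    IsInvariantSubspace ρ (p ⊓ q) := fun g x hx => ⟨hp g x hx.1, hq g x hx.2⟩

theorem isInvariantSubspace_ker (hA : IsEquivariant ρ A) :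
    IsInvariantSubspace ρ (ker A) := fun g x hx => by
  rw [mem_ker, ← hA.apply_comm, mem_ker.1 hx, map_zero]

theorem isInvariantSubspace_eigenspace (hA : IsEquivariant ρ A) (c : ℂ) :
    IsInvariantSubspace ρ (Module.End.eigenspace A c) := fun g x hx => by
  rw [Module.End.mem_eigenspace_iff] at hx ⊢
  rw [← hA.apply_comm, hx, map_smul]

namespace IsIrreducibleInvariant

theorem disjoint_ker_or_le_ker (hp : IsIrreducibleInvariant ρ p) (hA : IsEquivariant ρ A) :
    Disjoint p (ker A) ∨ p ≤ ker A := by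
  rcases hp.2.2 _ inf_le_left (hp.1.inf (isInvariantSubspace_ker hA)) with h | h
  · exact .inl (disjoint_iff.2 h)
  · exact .inr (inf_eq_left.1 h)

theorem map (hp : IsIrreducibleInvariant ρ p) (hA : IsEquivariant ρ A)
    (hdisj : Disjoint p (ker A)) : IsIrreducibleInvariant ρ (p.map A) := by
  refine ⟨hp.1.map hA, fun h => hp.2.1 ?_, fun r hr hrinv => ?_⟩
  · exact disjoint_self.1 (hdisj.mono_right (le_ker_iff_map.2 h))
  rcases hp.2.2 _ inf_le_left (hp.1.inf (hrinv.comap hA)) with h | h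
  · refine .inl (eq_bot_iff.2 fun y hy => ?_)
    obtain ⟨x, hx, rfl⟩ := hr hy
    have : x ∈ p ⊓ r.comap A := ⟨hx, hy⟩
    rw [h, Submodule.mem_bot] at this
    rw [this, map_zero]
    exact zero_mem _
  · exact .inr (le_antisymm hr (map_le_iff_le_comap.2 (inf_eq_left.1 h)))

end IsIrreducibleInvariant

theorem RepIso.symm (hp : IsInvariantSubspace ρ p) (h : RepIso ρ p q) : RepIso ρ q p := by
  obtain ⟨e, he⟩ := h
  refine ⟨e.symm, fun g y hy => ?_⟩
  have hx : ρ g (e.symm y : W) ∈ p := hp g _ (e.symm y).2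
  have : e ⟨ρ g (e.symm y : W), hx⟩ = ⟨ρ g y, hy⟩ := Subtype.ext (by simp [he g _ hx])
  rw [← this, LinearEquiv.symm_apply_apply]

theorem RepIso.trans (h₁ : RepIso ρ p q) (h₂ : RepIso ρ q r) : RepIso ρ p r := by
  obtain ⟨e₁, he₁⟩ := h₁
  obtain ⟨e₂, he₂⟩ := h₂
  refine ⟨e₁.trans e₂, fun g x hx => ?_⟩
  have hmem : ρ g (e₁ x : W) ∈ q := he₁ g x hx ▸ (e₁ ⟨ρ g x, hx⟩).2
  have : e₁ ⟨ρ g x, hx⟩ = ⟨ρ g (e₁ x : W), hmem⟩ := Subtype.ext (he₁ g x hx)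
  simp only [LinearEquiv.trans_apply, this]
  exact he₂ g (e₁ x) hmem

theorem repIso_map (hA : IsEquivariant ρ A) (hdisj : Disjoint p (ker A)) :
    RepIso ρ p (p.map A) := by
  have hbij : Function.Bijective (A.submoduleMap p) := by
    refine ⟨fun x y hxy => ?_, A.submoduleMap_surjective p⟩
    have hxy : A ((x : W) - y) = 0 := by
      rw [map_sub, sub_eq_zero]
      exact congrArg Subtype.val hxy
    exact Subtype.ext (sub_eq_zero.1 (disjoint_ker.1 hdisj _ (sub_mem x.2 y.2) hxy))
  exact ⟨LinearEquiv.ofBijective _ hbij, fun g x _ => (hA.apply_comm g x).symm⟩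

theorem IsIrreducibleInvariant.mapsTo_of_forall_repIso_eq {V : Submodule ℂ W}
    (hp : IsIrreducibleInvariant ρ p) (hA : IsEquivariant ρ A) (hAV : range A ≤ V)
    (huniq : ∀ q ≤ V, IsIrreducibleInvariant ρ q → RepIso ρ q p → q = p) :
    ∀ x ∈ p, A x ∈ p := by
  rcases hp.disjoint_ker_or_le_ker hA with h | h
  · intro x hx
    rw [← huniq _ (map_le_range.trans hAV) (hp.map hA h) ((repIso_map hA h).symm hp.1)]
    exact mem_map_of_mem hx
  · exact fun x hx => (mem_ker.1 (h hx)).symm ▸ zero_mem _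

end

section

variable {ρ : G →* (W →ₗ[ℂ] W)} {A : W →ₗ[ℂ] W} {p : Submodule ℂ W}

theorem adjoint_map_eq_map_inv
    (hρ : ∀ (g : G) (x y : W), ⟪ρ g x, ρ g y⟫_ℂ = ⟪x, y⟫_ℂ) (g : G) :
    adjoint (ρ g) = ρ g⁻¹ := by
  refine ((eq_adjoint_iff _ _).2 fun x y => ?_).symm
  rw [← hρ g, ← Module.End.mul_apply, ← map_mul, mul_inv_cancel, map_one, Module.End.one_apply]

theorem IsEquivariant.adjoint
    (hρ : ∀ (g : G) (x y : W), ⟪ρ g x, ρ g y⟫_ℂ = ⟪x, y⟫_ℂ) (hA : IsEquivariant ρ A) :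
    IsEquivariant ρ (LinearMap.adjoint A) := fun g => by
  have := congrArg LinearMap.adjoint (hA g⁻¹)
  rwa [adjoint_comp, adjoint_comp, adjoint_map_eq_map_inv hρ, inv_inv, eq_comm] at this

theorem IsIrreducibleInvariant.exists_smul_of_mapsTo (hp : IsIrreducibleInvariant ρ p)
    (hA : IsEquivariant ρ A) (hAp : ∀ x ∈ p, A x ∈ p) : ∃ c : ℂ, ∀ x ∈ p, A x = c • x := by
  have : Nontrivial p := nontrivial_iff_ne_bot.2 hp.2.1
  obtain ⟨c, hc⟩ := Module.End.exists_eigenvalue (A.restrict hAp)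
  obtain ⟨v, hv⟩ := hc.exists_hasEigenvector
  have hv' : (v : W) ∈ p ⊓ Module.End.eigenspace A c := by
    refine ⟨v.2, Module.End.mem_eigenspace_iff.2 ?_⟩
    exact congrArg Subtype.val (Module.End.mem_eigenspace_iff.1 hv.1)
  rcases hp.2.2 _ inf_le_left (hp.1.inf (isInvariantSubspace_eigenspace hA c)) with h | h
  · rw [h, Submodule.mem_bot] at hv'
    exact absurd (Subtype.ext hv') hv.2
  · refine ⟨c, fun x hx => ?_⟩
    rw [← h] at hx
    exact Module.End.mem_eigenspace_iff.1 hx.2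

end

theorem LinearMap.apply_eq_smul_starProjection_of_adjoint_eq_smul {𝕜 E : Type*} [RCLike 𝕜]
    [NormedAddCommGroup E] [InnerProductSpace 𝕜 E] [FiniteDimensional 𝕜 E]
    {K : Submodule 𝕜 E} {A : E →ₗ[𝕜] E} {d : 𝕜} (hA : ∀ x, A x ∈ K)
    (hd : ∀ w ∈ K, adjoint A w = d • w) (x : E) :
    A x = star d • K.starProjection x := by
  set y := A x - star d • K.starProjection x
  have hy : y ∈ K := sub_mem (hA x) (smul_mem _ _ (K.starProjection_apply_mem x))
  have : ⟪y, y⟫_𝕜 = 0 := by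
    rw [inner_sub_right, inner_smul_right, ← adjoint_inner_left, hd y hy,
      inner_smul_left, ← K.inner_starProjection_left_eq_right, K.starProjection_eq_self_iff.2 hy,
      starRingEnd_apply, sub_self]
  exact sub_eq_zero.1 (inner_self_eq_zero.1 this)

theorem schur_sandwich_proportional_orthogonalProjection_general (ρ : G →* (W →ₗ[ℂ] W))
    (hρ : ∀ (g : G) (x y : W), @inner ℂ W _ (ρ g x) (ρ g y) = @inner ℂ W _ x y)
    (T : W →ₗ[ℂ] W) (hTequiv : ∀ g : G, ρ g ∘ₗ T = T ∘ₗ ρ g)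
    (hU : IsIrreducibleInvariant ρ (LinearMap.range T))
    (P : W →ₗ[ℂ] W) (hPequiv : ∀ g : G, ρ g ∘ₗ P = P ∘ₗ ρ g)
    (hPsa : ∀ x y : W, @inner ℂ W _ (P x) y = @inner ℂ W _ x (P y))
    (Ut : Submodule ℂ W)
    (hunique : ∀ q : Submodule ℂ W, q ≤ LinearMap.range P →
      IsIrreducibleInvariant ρ q → RepIso ρ q (LinearMap.range T) → q = Ut)
    (hne : P ∘ₗ T ∘ₗ P ≠ 0) :
    ∃ c : ℂ, c ≠ 0 ∧ ∀ x : W, P (T (P x)) = c • ((Submodule.orthogonalProjectionOnto Ut x : Ut) : W) := by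
  have hP : IsEquivariant ρ P := hPequiv
  have hS : IsEquivariant ρ (P ∘ₗ T ∘ₗ P) := hP.comp (IsEquivariant.comp hTequiv hP)
  have hPU : Disjoint (range T) (ker P) :=
    (hU.disjoint_ker_or_le_ker hP).resolve_right fun h =>
      hne (LinearMap.ext fun x => h (mem_range_self T (P x)))
  have hUP : IsIrreducibleInvariant ρ ((range T).map P) := hU.map hP hPU
  have hUP_iso : RepIso ρ ((range T).map P) (range T) := (repIso_map hP hPU).symm hU.1
  obtain rfl : (range T).map P = Ut := hunique _ map_le_range hUP hUP_iso
  have hSadj_range : range (adjoint (P ∘ₗ T ∘ₗ P)) ≤ range P := by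
    rw [adjoint_comp, adjoint_comp, IsSymmetric.adjoint_eq hPsa]
    exact (range_comp_le_range _ _).trans (range_comp_le_range _ _)
  obtain ⟨d, hd⟩ := hUP.exists_smul_of_mapsTo (hS.adjoint hρ) <|
    hUP.mapsTo_of_forall_repIso_eq (hS.adjoint hρ) hSadj_range
      fun q hq hirr hiso => hunique q hq hirr (hiso.trans hUP_iso)
  have hformula : ∀ x, (P ∘ₗ T ∘ₗ P) x = star d • ((range T).map P).starProjection x :=
    apply_eq_smul_starProjection_of_adjoint_eq_smul
      (fun x => mem_map_of_mem (mem_range_self T (P x))) hd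
  refine ⟨star d, fun hd0 => hne (LinearMap.ext fun x => ?_), fun x => ?_⟩
  · rw [LinearMap.zero_apply, hformula x, hd0, zero_smul]
  · simpa only [comp_apply, starProjection_apply] using hformula x

/-- **Corollary (ii) of Schur's lemma.**  Let `W` carry a unitary representation `ρ` of a
group `G`, let `T : W → W` be a `G`-equivariant projection whose image `U` is an
irreducible invariant subspace.  Let `P : W → W` be a self-adjoint `G`-equivariant
projection such that the image of `P` contains exactly one irreducible invariant
subspace `Ũ` isomorphic to `U` as a representation of `G`.  If `P T P ≠ 0`, then
`P T P` is a nonzero scalar multiple of the orthogonal projection of `W` onto `Ũ`. -/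
theorem schur_sandwich_proportional_orthogonalProjection (ρ : G →* (W →ₗ[ℂ] W))
    (hρ : ∀ (g : G) (x y : W), @inner ℂ W _ (ρ g x) (ρ g y) = @inner ℂ W _ x y)
    (T : W →ₗ[ℂ] W) (hTequiv : ∀ g : G, ρ g ∘ₗ T = T ∘ₗ ρ g) (hTproj : T ∘ₗ T = T)
    (hU : IsIrreducibleInvariant ρ (LinearMap.range T))
    (P : W →ₗ[ℂ] W) (hPequiv : ∀ g : G, ρ g ∘ₗ P = P ∘ₗ ρ g) (hPproj : P ∘ₗ P = P)
    (hPsa : ∀ x y : W, @inner ℂ W _ (P x) y = @inner ℂ W _ x (P y))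
    (Ut : Submodule ℂ W) (hUtle : Ut ≤ LinearMap.range P)
    (hUtirr : IsIrreducibleInvariant ρ Ut) (hUtiso : RepIso ρ Ut (LinearMap.range T))
    (hunique : ∀ q : Submodule ℂ W, q ≤ LinearMap.range P →
      IsIrreducibleInvariant ρ q → RepIso ρ q (LinearMap.range T) → q = Ut)
    (hne : P ∘ₗ T ∘ₗ P ≠ 0) :
    ∃ c : ℂ, c ≠ 0 ∧ ∀ x : W, P (T (P x)) = c • ((Submodule.orthogonalProjectionOnto Ut x : Ut) : W) :=
  schur_sandwich_proportional_orthogonalProjection_general ρ hρ T hTequiv hU P hPequiv hPsa Ut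
    hunique hne
end

section
/- For every n ≥ 1 and every N ≥ 1, the dimensions of the irreducible invariant subspaces sum to the full dimension: ∑_{T ∈ SYT_n} f_T(N)/H(T) = N^n, where the sum runs over all standard Young tableaux T with n boxes, f_T(N) = ∏_{(j,k)} (N + k − j) with the product over all boxes of the shape of T in row j and column k, and H(T) is the product of the hook lengths of the boxes of the shape of T. -/
open scoped Classical

/-!
Induction on `n`: deleting the box of the largest entry identifies `SYT_{n+1}` with pairs of a
tableau `T ∈ SYT_n` and a row where a box can be added to its shape, so it suffices that adding a
box to `μ` in all possible ways multiplies `d(μ) = f_μ(N) / H(μ)` by `N`. With `β = μ + δ` and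
`δ = (N - 1, …, 1, 0)`, the hook-content formula takes Weyl's form `d(μ) = Δ(β) / Δ(δ)` for the
Vandermonde product `Δ`; adding a box in row `i` turns `β` into `β + eᵢ` (for a row where no box
can be added, `Δ(β + eᵢ) = 0`), and `∑ᵢ Δ(β + eᵢ) = N Δ(β)`: write `Δ(β)` as the determinant of
the matrix `M` of falling factorials `(βᵢ)_j`; shifting `βᵢ` by one adds row `i` of `M S` to row
`i` of `M`, where `S` is the forward difference operator, and these increments add up to
`trace S · det M = 0`.
-/

open Finset

section FallingFactorials

open Polynomial

theorem descPochhammer_eval_add_one {R : Type*} [CommRing R] (m : ℕ) (y : R) :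
    (descPochhammer R m).eval (y + 1) =
      (descPochhammer R m).eval y + m * (descPochhammer R (m - 1)).eval y := by
  cases m with
  | zero => simp
  | succ m =>
    have := congrArg (eval (y + 1)) (descPochhammer_succ_comp_X_sub_one (R := R) m)
    simp only [smul_eq_mul, eval_mul, eval_comp, eval_sub, eval_X, eval_one,
      add_sub_cancel_right, eval_add, eval_natCast] at this
    push_cast
    linear_combination -this

namespace Matrix

theorem sum_det_updateRow_mul {ι R : Type*} [Fintype ι] [DecidableEq ι] [CommRing R]
    (A S : Matrix ι ι R) : ∑ i, (A.updateRow i ((A * S) i)).det = S.trace * A.det := by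
  have cramer_expansion (i : ι) :
      (A.updateRow i ((A * S) i)).det = ∑ k, A.adjugate k i * (A * S) i k := by
    rw [← cramer_transpose_apply, cramer_eq_adjugate_mulVec, mulVec, dotProduct,
      ← adjugate_transpose]
    rfl
  simp only [cramer_expansion]
  rw [Finset.sum_comm]
  simp only [← mul_apply, ← Matrix.mul_assoc, adjugate_mul, smul_mul, Matrix.one_mul]
  simp [trace, mul_comm, Finset.mul_sum]

theorem sum_det_vandermonde_add_single {R : Type*} [CommRing R] [IsDomain R] {N : ℕ}
    (v : Fin N → R) : ∑ i, (vandermonde (v + Pi.single i 1)).det = N * (vandermonde v).det := by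
  set M : (Fin N → R) → Matrix (Fin N) (Fin N) R :=
    fun w => of fun i j => (descPochhammer R j).eval (w i)
  -- the matrix of the forward difference `p ↦ p(X + 1) - p(X)` in the basis of falling factorials
  set S : Matrix (Fin N) (Fin N) R := of fun l j => if (l : ℕ) + 1 = j then (j : R) else 0
  have det_M (w : Fin N → R) : (vandermonde w).det = (M w).det :=
    det_eval_matrixOfPolynomials_eq_det_vandermonde w _
      (fun j => descPochhammer_natDegree R j) (fun j => monic_descPochhammer R j)
  have mul_S (i j : Fin N) :
      (M v * S) i j = j * (descPochhammer R (j - 1)).eval (v i) := by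
    rw [mul_apply]
    simp only [M, S, of_apply, mul_ite, mul_zero]
    rcases j with ⟨_ | j, hj⟩
    · simp
    · rw [Finset.sum_eq_single ⟨j, by omega⟩] <;> simp_all [mul_comm, Fin.ext_iff]
  have M_add_single (i : Fin N) :
      M (v + Pi.single i 1) = (M v).updateRow i (M v i + (M v * S) i) := by
    ext k j
    rcases eq_or_ne k i with rfl | hki
    · simp [M, mul_S, descPochhammer_eval_add_one]
    · simp [M, hki]
  have trace_S : S.trace = 0 := by simp [trace, S]
  calc ∑ i, (vandermonde (v + Pi.single i 1)).det
      = ∑ i, ((M v).det + ((M v).updateRow i ((M v * S) i)).det) := by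
        refine Finset.sum_congr rfl fun i _ => ?_
        rw [det_M, M_add_single, det_updateRow_add, updateRow_eq_self]
    _ = N * (vandermonde v).det := by
        rw [sum_add_distrib, sum_det_updateRow_mul, trace_S, det_M]
        simp

end Matrix

end FallingFactorials

section VandermondeProd

variable {R : Type*} [CommRing R]

def vandermondeProd (N : ℕ) (x : ℕ → R) : R :=
  ∏ i ∈ range N, ∏ k ∈ Ioo i N, (x i - x k)

theorem Fin.prod_prod_Ioi_eq_prod_range {M : Type*} [CommMonoid M] (N : ℕ) (f : ℕ → ℕ → M) :
    ∏ i : Fin N, ∏ k ∈ Ioi i, f i k = ∏ i ∈ range N, ∏ k ∈ Ioo i N, f i k := by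
  rw [← Fin.prod_univ_eq_prod_range (fun i => ∏ k ∈ Ioo i N, f i k)]
  refine Finset.prod_congr rfl fun i _ => ?_
  rw [← Fin.map_valEmbedding_Ioi, prod_map]
  rfl

theorem vandermondeProd_eq_mul_det (N : ℕ) (x : ℕ → R) :
    vandermondeProd N x =
      (∏ i ∈ range N, ∏ _k ∈ Ioo i N, (-1 : R)) *
        (Matrix.vandermonde fun i : Fin N => x i).det := by
  rw [Matrix.det_vandermonde, Fin.prod_prod_Ioi_eq_prod_range N fun i k => x k - x i,
    vandermondeProd, ← prod_mul_distrib]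
  refine Finset.prod_congr rfl fun i _ => ?_
  rw [← prod_mul_distrib]
  exact Finset.prod_congr rfl fun k _ => by ring

theorem sum_vandermondeProd_add_single [IsDomain R] (N : ℕ) (x : ℕ → R) :
    ∑ i ∈ range N, vandermondeProd N (x + Pi.single i 1) = N * vandermondeProd N x := by
  have restrict (i : Fin N) :
      (fun k : Fin N => (x + Pi.single (i : ℕ) 1 : ℕ → R) k) =
        (fun k : Fin N => x k) + Pi.single i 1 := by
    ext k
    simp [Pi.single_apply, Fin.ext_iff]
  simp only [vandermondeProd_eq_mul_det, ← Fin.sum_univ_eq_sum_range, restrict, ← mul_sum,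
    Matrix.sum_det_vandermonde_add_single]
  ring

theorem vandermondeProd_eq_zero {N i k : ℕ} {x : ℕ → R} (hik : i < k) (hk : k < N)
    (h : x i = x k) : vandermondeProd N x = 0 :=
  prod_eq_zero (mem_range.2 (hik.trans hk)) <|
    prod_eq_zero (mem_Ioo.2 ⟨hik, hk⟩) (sub_eq_zero.2 h)

theorem vandermondeProd_natCast {N : ℕ} {x : ℕ → ℕ} (hx : ∀ i k, i < k → k < N → x k ≤ x i) :
    vandermondeProd N (fun i => (x i : R)) =
      ((∏ i ∈ range N, ∏ k ∈ Ioo i N, (x i - x k) : ℕ) : R) := by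
  push_cast
  refine Finset.prod_congr rfl fun i _ => Finset.prod_congr rfl fun k hk => ?_
  obtain ⟨hik, hk⟩ := mem_Ioo.1 hk
  rw [Nat.cast_sub (hx i k hik hk)]

end VandermondeProd

namespace YoungDiagram

variable {μ : YoungDiagram} {i j k N : ℕ}

def insertCell (μ : YoungDiagram) (c : ℕ × ℕ) (h : ∀ d < c, d ∈ μ) : YoungDiagram where
  cells := insert c μ.cells
  isLowerSet a b hba ha := by
    simp only [coe_insert, Set.mem_insert_iff, mem_coe, mem_cells] at ha ⊢
    rcases ha with rfl | ha
    · exact hba.eq_or_lt.imp id (h b)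
    · exact Or.inr (μ.isLowerSet hba ha)

@[simp]
theorem mem_insertCell {c d : ℕ × ℕ} {h : ∀ d < c, d ∈ μ} :
    d ∈ μ.insertCell c h ↔ d = c ∨ d ∈ μ := by
  rw [← mem_cells, insertCell, mem_insert, mem_cells]

def eraseCell (μ : YoungDiagram) (c : ℕ × ℕ) (h : ∀ d ∈ μ, ¬c < d) : YoungDiagram where
  cells := μ.cells.erase c
  isLowerSet a b hba ha := by
    simp only [coe_erase, Set.mem_sdiff, mem_coe, mem_cells, Set.mem_singleton_iff] at ha ⊢
    refine ⟨μ.isLowerSet hba ha.1, ?_⟩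
    rintro rfl
    exact h a ha.1 (lt_of_le_of_ne hba fun hab => ha.2 hab.symm)

@[simp]
theorem mem_eraseCell {c d : ℕ × ℕ} {h : ∀ d ∈ μ, ¬c < d} :
    d ∈ μ.eraseCell c h ↔ d ≠ c ∧ d ∈ μ := by
  rw [← mem_cells, eraseCell, mem_erase, mem_cells]

theorem rowLen_eq_of_forall_mem_iff {r : ℕ} (h : ∀ j, (i, j) ∈ μ ↔ j < r) : μ.rowLen i = r :=
  eq_of_forall_lt_iff fun j => by rw [← mem_iff_lt_rowLen, h]

theorem rowLen_pos_iff : 0 < μ.rowLen i ↔ i < μ.colLen 0 :=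
  mem_iff_lt_rowLen.symm.trans mem_iff_lt_colLen

theorem colLen_le_iff : μ.colLen j ≤ i ↔ (i, j) ∉ μ := by
  rw [mem_iff_lt_colLen, not_lt]

theorem mk_rowLen_notMem (μ : YoungDiagram) (i : ℕ) : (i, μ.rowLen i) ∉ μ := fun h =>
  (mem_iff_lt_rowLen.1 h).false

def IsAddableRow (μ : YoungDiagram) (i : ℕ) : Prop :=
  ∀ d < (i, μ.rowLen i), d ∈ μ

theorem IsAddableRow.le_colLen (h : μ.IsAddableRow i) : i ≤ μ.colLen 0 := by
  by_contra! hi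
  have hrow : μ.rowLen i = 0 := Nat.eq_zero_of_not_pos (mt rowLen_pos_iff.1 (by omega))
  have := mem_iff_lt_colLen.1 (h (i - 1, 0) (Prod.mk_lt_mk.2 (Or.inl ⟨by omega, by omega⟩)))
  omega

theorem pos_and_rowLen_pred_eq_of_not_isAddableRow (h : ¬μ.IsAddableRow i) :
    0 < i ∧ μ.rowLen (i - 1) = μ.rowLen i := by
  simp only [IsAddableRow, not_forall] at h
  obtain ⟨⟨a, b⟩, hlt, hab⟩ := h
  obtain ⟨ha, hb⟩ := Prod.mk_le_mk.1 hlt.le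
  have hne : a = i → b ≠ μ.rowLen i := fun hai hbi => hlt.ne (by rw [hai, hbi])
  rw [mem_iff_lt_rowLen] at hab
  have := μ.rowLen_anti a i ha
  have := μ.rowLen_anti a (i - 1) (by omega)
  have := μ.rowLen_anti (i - 1) i (by omega)
  omega

/-- `μ` with a box added at the end of row `i`; the junk value `μ` if row `i` is not addable. -/
noncomputable def addBox (μ : YoungDiagram) (i : ℕ) : YoungDiagram :=
  if h : μ.IsAddableRow i then μ.insertCell (i, μ.rowLen i) h else μ

theorem mem_addBox {c : ℕ × ℕ} (h : μ.IsAddableRow i) :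
    c ∈ μ.addBox i ↔ c = (i, μ.rowLen i) ∨ c ∈ μ := by
  rw [addBox, dif_pos h]
  exact mem_insertCell

theorem rowLen_addBox (h : μ.IsAddableRow i) (k : ℕ) :
    (μ.addBox i).rowLen k = μ.rowLen k + if k = i then 1 else 0 := by
  refine rowLen_eq_of_forall_mem_iff fun j => ?_
  rw [mem_addBox h, Prod.mk.injEq, mem_iff_lt_rowLen]
  split_ifs with hk
  · subst hk; omega
  · omega

noncomputable def addableRows (μ : YoungDiagram) : Finset ℕ :=
  (range (μ.colLen 0 + 1)).filter μ.IsAddableRow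

theorem mem_addableRows : i ∈ μ.addableRows ↔ μ.IsAddableRow i := by
  rw [addableRows, mem_filter, mem_range]
  exact ⟨And.right, fun h => ⟨Nat.lt_succ_of_le h.le_colLen, h⟩⟩

theorem addableRows_eq_filter_range {M : ℕ} (hM : μ.colLen 0 < M) :
    μ.addableRows = (range M).filter μ.IsAddableRow := by
  ext i
  rw [mem_addableRows, mem_filter, mem_range]
  exact ⟨fun h => ⟨h.le_colLen.trans_lt hM, h⟩, And.right⟩

/-- `μᵢ + N - 1 - i`, the `i`-th coordinate of `μ + δ` with `δ = (N - 1, …, 1, 0)`. -/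
def shiftedRowLen (μ : YoungDiagram) (N i : ℕ) : ℕ :=
  μ.rowLen i + (N - 1 - i)

theorem shiftedRowLen_lt (hik : i < k) (hk : k < N) :
    μ.shiftedRowLen N k < μ.shiftedRowLen N i := by
  have := μ.rowLen_anti i k hik.le
  unfold shiftedRowLen
  omega

theorem shiftedRowLen_addBox (h : μ.IsAddableRow i) :
    (μ.addBox i).shiftedRowLen N = μ.shiftedRowLen N + Pi.single i 1 := by
  ext k
  simp only [shiftedRowLen, rowLen_addBox h, Pi.add_apply, Pi.single_apply]
  omega

theorem prod_cells_eq_prod_rows {M : Type*} [CommMonoid M] (hμ : μ.colLen 0 ≤ N)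
    (f : ℕ × ℕ → M) :
    ∏ c ∈ μ.cells, f c = ∏ i ∈ range N, ∏ j ∈ range (μ.rowLen i), f (i, j) := by
  refine prod_finset_product _ _ _ fun ⟨i, j⟩ => ?_
  rw [mem_cells, mem_range, mem_range, ← mem_iff_lt_rowLen]
  refine ⟨fun hij => ⟨?_, hij⟩, And.right⟩
  have := mem_iff_lt_colLen.1 (μ.up_left_mem le_rfl (Nat.zero_le j) hij)
  omega

end YoungDiagram

section HookContent

open YoungDiagram Nat

variable {μ : YoungDiagram} {i j k N : ℕ}

theorem hookLength_add (h : (i, j) ∈ μ) :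
    hookLength μ (i, j) + (i + j + 1) = μ.rowLen i + μ.colLen j := by
  have := mem_iff_lt_rowLen.1 h
  have := mem_iff_lt_colLen.1 h
  simp only [hookLength]
  omega

theorem hookLength_lt_hookLength (hj : j < k) (hk : (i, k) ∈ μ) :
    hookLength μ (i, k) < hookLength μ (i, j) := by
  have := hookLength_add hk
  have := hookLength_add (μ.up_left_mem le_rfl hj.le hk)
  have := μ.colLen_anti j k hj.le
  omega

theorem hookLength_ne_shiftedRowLen_sub (h : (i, j) ∈ μ) (hik : i < k) (hk : k < N) :
    hookLength μ (i, j) ≠ μ.shiftedRowLen N i - μ.shiftedRowLen N k := by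
  have := hookLength_add h
  have := shiftedRowLen_lt (μ := μ) hik hk
  unfold shiftedRowLen at *
  by_cases hkj : (k, j) ∈ μ
  · have := mem_iff_lt_rowLen.1 hkj
    have := mem_iff_lt_colLen.1 hkj
    omega
  · have := mt mem_iff_lt_rowLen.2 hkj
    have := mt mem_iff_lt_colLen.2 hkj
    omega

theorem prod_mul_prod_eq_factorial {s t : Finset ℕ} {m : ℕ} (hst : Disjoint s t)
    (hs : s ⊆ Icc 1 m) (ht : t ⊆ Icc 1 m) (hcard : #s + #t = m) :
    (∏ a ∈ s, a) * ∏ a ∈ t, a = m ! := by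
  have hunion : s ∪ t = Icc 1 m :=
    eq_of_subset_of_card_le (union_subset hs ht) (by rw [card_union_of_disjoint hst]; simp [hcard])
  rw [← prod_union hst, hunion, ← prod_Ico_id_eq_factorial]
  rfl

theorem injOn_hookLength_row :
    Set.InjOn (fun j => hookLength μ (i, j)) (range (μ.rowLen i)) := by
  intro a ha b hb hab
  simp only [coe_range, Set.mem_Iio, ← mem_iff_lt_rowLen] at ha hb
  rcases lt_trichotomy a b with h | h | h
  · exact absurd hab.symm (hookLength_lt_hookLength h hb).ne
  · exact h
  · exact absurd hab (hookLength_lt_hookLength h ha).ne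

theorem injOn_shiftedRowLen_sub :
    Set.InjOn (fun k => μ.shiftedRowLen N i - μ.shiftedRowLen N k) (Ioo i N) := by
  intro a ha b hb hab
  simp only [coe_Ioo, Set.mem_Ioo] at ha hb hab
  have := shiftedRowLen_lt (μ := μ) ha.1 ha.2
  have := shiftedRowLen_lt (μ := μ) hb.1 hb.2
  rcases lt_trichotomy a b with h | h | h
  · have := shiftedRowLen_lt (μ := μ) h hb.2; omega
  · exact h
  · have := shiftedRowLen_lt (μ := μ) h ha.2; omega

theorem prod_hookLength_row_mul (hμ : μ.colLen 0 ≤ N) (hi : i < N) :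
    (∏ j ∈ range (μ.rowLen i), hookLength μ (i, j)) *
        ∏ k ∈ Ioo i N, (μ.shiftedRowLen N i - μ.shiftedRowLen N k) =
      (μ.shiftedRowLen N i)! := by
  have hook_inj := injOn_hookLength_row (μ := μ) (i := i)
  have sub_inj := injOn_shiftedRowLen_sub (μ := μ) (i := i) (N := N)
  have hooks := prod_image (f := fun a => a) hook_inj
  have subs := prod_image (f := fun a => a) sub_inj
  rw [← hooks, ← subs]
  -- the hook lengths of row `i` and the differences `βᵢ - βₖ` (`i < k < N`) partition `[1, βᵢ]`
  apply prod_mul_prod_eq_factorial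
  · simp only [disjoint_left, mem_image, mem_range, mem_Ioo, not_exists, not_and]
    rintro _ ⟨j, hj, rfl⟩ k hk
    exact (hookLength_ne_shiftedRowLen_sub (mem_iff_lt_rowLen.2 hj) hk.1 hk.2).symm
  · simp only [subset_iff, mem_image, mem_range, mem_Icc, forall_exists_index, and_imp]
    rintro _ j hj rfl
    have := hookLength_add (mem_iff_lt_rowLen.2 hj)
    have := (μ.colLen_anti 0 j (Nat.zero_le j)).trans hμ
    unfold shiftedRowLen hookLength at *
    omega
  · simp only [subset_iff, mem_image, mem_Ioo, mem_Icc, forall_exists_index, and_imp]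
    rintro _ k hik hk rfl
    have := shiftedRowLen_lt (μ := μ) hik hk
    omega
  · rw [Finset.card_image_of_injOn hook_inj, Finset.card_image_of_injOn sub_inj, card_range,
      Nat.card_Ioo]
    unfold shiftedRowLen
    omega

theorem hookProd_mul_prod_sub (hμ : μ.colLen 0 ≤ N) :
    hookProd μ * ∏ i ∈ range N, ∏ k ∈ Ioo i N, (μ.shiftedRowLen N i - μ.shiftedRowLen N k) =
      ∏ i ∈ range N, (μ.shiftedRowLen N i)! := by
  rw [hookProd, prod_cells_eq_prod_rows hμ, ← prod_mul_distrib]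
  exact prod_congr rfl fun i hi => prod_hookLength_row_mul hμ (mem_range.1 hi)

theorem fPoly_mul_prod_factorial (hμ : μ.colLen 0 ≤ N) :
    fPoly μ N * ∏ i ∈ range N, ((N - 1 - i)! : ℂ) =
      ∏ i ∈ range N, ((μ.shiftedRowLen N i)! : ℂ) := by
  rw [fPoly, prod_cells_eq_prod_rows hμ, ← prod_mul_distrib]
  refine prod_congr rfl fun i hi => ?_
  have hi : i < N := mem_range.1 hi
  have row : ∏ j ∈ range (μ.rowLen i), ((N : ℂ) + j - i) = (N - i).ascFactorial (μ.rowLen i) := by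
    rw [ascFactorial_eq_prod_range, cast_prod]
    refine prod_congr rfl fun j _ => ?_
    push_cast [Nat.cast_sub hi.le]
    ring
  have hNi : N - i = N - 1 - i + 1 := by omega
  rw [row, hNi, mul_comm, ← cast_mul, factorial_mul_ascFactorial, shiftedRowLen, add_comm]

end HookContent

section SchurDim

open YoungDiagram Nat

variable {μ : YoungDiagram} {i N : ℕ}

/-- By the hook-content formula, the dimension of the irreducible polynomial representation of
`GL_N(ℂ)` indexed by `μ`. -/
noncomputable def schurDim (μ : YoungDiagram) (N : ℕ) : ℂ :=
  fPoly μ N / hookProd μ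

theorem schurDim_eq_zero (h : (N, 0) ∈ μ) : schurDim μ N = 0 := by
  rw [schurDim, fPoly, prod_eq_zero ((mem_cells _).2 h) (by simp), zero_div]

theorem schurDim_eq_div_vandermondeProd (hμ : μ.colLen 0 ≤ N) :
    schurDim μ N = vandermondeProd N (fun i => (μ.shiftedRowLen N i : ℂ)) /
      vandermondeProd N (fun i => ((⊥ : YoungDiagram).shiftedRowLen N i : ℂ)) := by
  have hook (ν : YoungDiagram) (hν : ν.colLen 0 ≤ N) :
      vandermondeProd N (fun i => (ν.shiftedRowLen N i : ℂ)) * hookProd ν =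
        ∏ i ∈ range N, ((ν.shiftedRowLen N i)! : ℂ) := by
    rw [vandermondeProd_natCast fun i k hik hk => (shiftedRowLen_lt hik hk).le, mul_comm,
      ← cast_mul, hookProd_mul_prod_sub hν, cast_prod]
  have shiftedRowLen_bot (i : ℕ) : (⊥ : YoungDiagram).shiftedRowLen N i = N - 1 - i := by
    rw [shiftedRowLen, rowLen_eq_of_forall_mem_iff (r := 0) (by simp), zero_add]
  -- for the empty diagram the same identity evaluates `Δ(δ) = ∏ᵢ (N - 1 - i)!`
  have hδ := hook ⊥ (colLen_le_iff.2 (notMem_bot _))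
  simp only [hookProd, cells_bot, prod_empty, cast_one, mul_one, shiftedRowLen_bot] at hδ
  have hδ_ne : ∏ i ∈ range N, ((N - 1 - i)! : ℂ) ≠ 0 :=
    prod_ne_zero_iff.2 fun i _ => cast_ne_zero.2 (factorial_ne_zero _)
  have hH : (hookProd μ : ℂ) ≠ 0 :=
    cast_ne_zero.2 (prod_ne_zero_iff.2 fun c _ => by simp [hookLength])
  simp only [shiftedRowLen_bot]
  rw [schurDim, div_eq_div_iff hH (hδ ▸ hδ_ne), hδ, fPoly_mul_prod_factorial hμ, hook μ hμ]

theorem schurDim_addBox (h : μ.IsAddableRow i) (hi : i < N) (hμ : μ.colLen 0 ≤ N) :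
    schurDim (μ.addBox i) N =
      vandermondeProd N ((fun k => (μ.shiftedRowLen N k : ℂ)) + Pi.single i 1) /
        vandermondeProd N (fun k => ((⊥ : YoungDiagram).shiftedRowLen N k : ℂ)) := by
  have hcol : (μ.addBox i).colLen 0 ≤ N := by
    rw [colLen_le_iff, mem_addBox h, Prod.mk.injEq, not_or, ← colLen_le_iff]
    omega
  rw [schurDim_eq_div_vandermondeProd hcol, shiftedRowLen_addBox h]
  congr 2
  ext k
  simp [Pi.single_apply]

theorem vandermondeProd_shiftedRowLen_add_single {R : Type*} [CommRing R]
    (h : ¬μ.IsAddableRow i) (hi : i < N) :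
    vandermondeProd N ((fun k => (μ.shiftedRowLen N k : R)) + Pi.single i 1) = 0 := by
  obtain ⟨hi0, hrow⟩ := pos_and_rowLen_pred_eq_of_not_isAddableRow h
  refine vandermondeProd_eq_zero (i := i - 1) (k := i) (by omega) hi ?_
  simp only [Pi.add_apply, Pi.single_apply, if_neg (by omega : i - 1 ≠ i), shiftedRowLen, hrow]
  push_cast [show N - 1 - (i - 1) = N - 1 - i + 1 by omega]
  ring

theorem sum_schurDim_addBox (μ : YoungDiagram) (N : ℕ) :
    ∑ i ∈ μ.addableRows, schurDim (μ.addBox i) N = N * schurDim μ N := by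
  by_cases hμ : μ.colLen 0 ≤ N
  swap
  · have h : (N, 0) ∈ μ := mem_iff_lt_colLen.2 (not_le.1 hμ)
    rw [schurDim_eq_zero h, mul_zero]
    exact sum_eq_zero fun i hi => schurDim_eq_zero ((mem_addBox (mem_addableRows.1 hi)).2 (.inr h))
  have last : (if μ.IsAddableRow N then schurDim (μ.addBox N) N else 0) = 0 :=
    ite_eq_right_iff.2 fun h => schurDim_eq_zero <|
      (μ.addBox N).up_left_mem le_rfl (Nat.zero_le _) ((mem_addBox h).2 (.inl rfl))
  calc ∑ i ∈ μ.addableRows, schurDim (μ.addBox i) N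
      = ∑ i ∈ range (N + 1), if μ.IsAddableRow i then schurDim (μ.addBox i) N else 0 := by
        rw [addableRows_eq_filter_range (Nat.lt_succ_of_le hμ), sum_filter]
    _ = ∑ i ∈ range N,
          vandermondeProd N ((fun k => (μ.shiftedRowLen N k : ℂ)) + Pi.single i 1) /
            vandermondeProd N (fun k => ((⊥ : YoungDiagram).shiftedRowLen N k : ℂ)) := by
        rw [sum_range_succ, last, add_zero]
        refine sum_congr rfl fun i hi => ?_
        split_ifs with h
        · exact schurDim_addBox h (mem_range.1 hi) hμ
        · rw [vandermondeProd_shiftedRowLen_add_single h (mem_range.1 hi), zero_div]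
    _ = N * schurDim μ N := by
        rw [← sum_div, sum_vandermondeProd_add_single, schurDim_eq_div_vandermondeProd hμ,
          mul_div_assoc]

end SchurDim

namespace Set.BijOn

open Function

variable {α β : Type*} [DecidableEq α] {f : α → β} {s : Set α} {t : Set β} {a : α}

theorem update_insert (h : BijOn f s t) (ha : a ∉ s) {b : β} (hb : b ∉ t) :
    BijOn (update f a b) (Insert.insert a s) (Insert.insert b t) := by
  have := (h.congr fun c hc => (update_of_ne (ne_of_mem_of_not_mem hc ha) b f).symm).insert
    (a := a) (by rwa [update_self])
  rwa [update_self] at this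

theorem update_sdiff_singleton (h : BijOn f s t) (ha : a ∈ s) (b : β) :
    BijOn (update f a b) (s \ {a}) (t \ {f a}) :=
  (h.sdiff_singleton ha).congr fun _ hc => (update_of_ne hc.2 b f).symm

end Set.BijOn

namespace SYT

open YoungDiagram Function

variable {n : ℕ}

theorem entry_mem_Icc (T : SYT n) {c : ℕ × ℕ} (hc : c ∈ T.shape) : T.entry c ∈ Set.Icc 1 n :=
  T.bijOn.mapsTo (mem_coe.2 ((mem_cells c).2 hc))

theorem entry_lt_entry (T : SYT n) {a b : ℕ × ℕ} (hab : a < b) (hb : b ∈ T.shape) :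
    T.entry a < T.entry b := by
  obtain ⟨a₁, a₂⟩ := a
  obtain ⟨b₁, b₂⟩ := b
  obtain ⟨h₁, h₂⟩ := Prod.mk_le_mk.1 hab.le
  rcases h₁.lt_or_eq with h₁ | rfl
  · have hcorner : (a₁, b₂) ∈ T.shape.cells :=
      (mem_cells _).2 (T.shape.up_left_mem h₁.le le_rfl hb)
    calc T.entry (a₁, a₂) ≤ T.entry (a₁, b₂) := by
          rcases h₂.lt_or_eq with h₂ | rfl
          · exact (T.row_lt a₁ a₂ b₂ h₂ hcorner).le
          · rfl
      _ < T.entry (b₁, b₂) := T.col_lt a₁ b₁ b₂ h₁ ((mem_cells _).2 hb)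
  · exact T.row_lt _ _ _ (Prod.mk_lt_mk_iff_right.1 hab) ((mem_cells _).2 hb)

theorem mem_shape_iff_entry_ne_zero (T : SYT n) {c : ℕ × ℕ} : c ∈ T.shape ↔ T.entry c ≠ 0 :=
  ⟨fun hc => Nat.one_le_iff_ne_zero.1 (T.entry_mem_Icc hc).1,
    fun h => by_contra fun hc => h (T.zero_outside c (mt (mem_cells c).1 hc))⟩

theorem ext_entry {T T' : SYT n} (h : T.entry = T'.entry) : T = T' := by
  have hshape : T.shape = T'.shape :=
    SetLike.ext fun c => by rw [mem_shape_iff_entry_ne_zero, mem_shape_iff_entry_ne_zero, h]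
  cases T
  cases T'
  subst hshape h
  rfl

def mk' (μ : YoungDiagram) (e : ℕ × ℕ → ℕ) (zero_outside : ∀ c ∉ μ, e c = 0)
    (bijOn : Set.BijOn e μ.cells (Set.Icc 1 n)) (lt : ∀ a b, a < b → b ∈ μ → e a < e b) :
    SYT n where
  shape := μ
  entry := e
  zero_outside c hc := zero_outside c (mt (mem_cells c).2 hc)
  bijOn := bijOn
  row_lt _ _ _ hj h := lt _ _ (Prod.mk_lt_mk_iff_right.2 hj) ((mem_cells _).1 h)
  col_lt _ _ _ hi h := lt _ _ (Prod.mk_lt_mk_iff_left.2 hi) ((mem_cells _).1 h)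

instance : Subsingleton (SYT 0) :=
  ⟨fun T T' => ext_entry <| funext fun c => by
    have (T : SYT 0) : c ∉ T.shape := fun hc => by have := T.entry_mem_Icc hc; simp at this
    rw [T.zero_outside c (mt (mem_cells c).1 (this T)),
      T'.zero_outside c (mt (mem_cells c).1 (this T'))]⟩

def empty : SYT 0 :=
  mk' ⊥ 0 (fun _ _ => rfl)
    (by rw [cells_bot, coe_empty, Set.Icc_eq_empty (by norm_num)]; exact Set.bijOn_empty _)
    (fun _ b _ hb => absurd hb (notMem_bot b))

section EraseMax

variable (T : SYT (n + 1))

theorem exists_entry_eq_succ : ∃ c ∈ T.shape, T.entry c = n + 1 := by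
  obtain ⟨c, hc, h⟩ := T.bijOn.surjOn (Set.right_mem_Icc.2 (Nat.le_add_left 1 n))
  exact ⟨c, (mem_cells c).1 hc, h⟩

noncomputable def maxCell : ℕ × ℕ :=
  (exists_entry_eq_succ T).choose

theorem maxCell_mem : T.maxCell ∈ T.shape :=
  (exists_entry_eq_succ T).choose_spec.1

theorem entry_maxCell : T.entry T.maxCell = n + 1 :=
  (exists_entry_eq_succ T).choose_spec.2

theorem eq_maxCell_of_entry {c : ℕ × ℕ} (hc : c ∈ T.shape) (h : T.entry c = n + 1) :
    c = T.maxCell :=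
  T.bijOn.injOn (mem_coe.2 ((mem_cells c).2 hc)) (mem_coe.2 ((mem_cells _).2 T.maxCell_mem))
    (h.trans T.entry_maxCell.symm)

theorem not_maxCell_lt {d : ℕ × ℕ} (hd : d ∈ T.shape) : ¬T.maxCell < d := fun h =>
  (T.entry_lt_entry h hd).not_ge (by rw [entry_maxCell]; exact (T.entry_mem_Icc hd).2)

noncomputable def eraseMax : SYT n :=
  mk' (T.shape.eraseCell T.maxCell fun _ hd => T.not_maxCell_lt hd) (update T.entry T.maxCell 0)
    (fun c hc => by
      by_cases hc' : c = T.maxCell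
      · rw [hc', update_self]
      · rw [update_of_ne hc']
        exact T.zero_outside c fun h => hc (mem_eraseCell.2 ⟨hc', (mem_cells c).1 h⟩))
    (by
      have := T.bijOn.update_sdiff_singleton (mem_coe.2 ((mem_cells _).2 T.maxCell_mem)) 0
      rwa [entry_maxCell, Set.Icc_sdiff_right, Set.Ico_add_one_right_eq_Icc, ← coe_erase] at this)
    (fun a b hab hb => by
      rw [mem_eraseCell] at hb
      have ha : a ≠ T.maxCell := by rintro rfl; exact T.not_maxCell_lt hb.2 hab
      rw [update_of_ne ha, update_of_ne hb.1]
      exact T.entry_lt_entry hab hb.2)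

theorem mem_shape_eraseMax {c : ℕ × ℕ} : c ∈ T.eraseMax.shape ↔ c ≠ T.maxCell ∧ c ∈ T.shape :=
  mem_eraseCell (h := fun _ hd => T.not_maxCell_lt hd)

theorem rowLen_eraseMax : T.eraseMax.shape.rowLen T.maxCell.1 = T.maxCell.2 := by
  refine rowLen_eq_of_forall_mem_iff fun j => ?_
  rw [mem_shape_eraseMax]
  refine ⟨fun ⟨hne, hj⟩ => ?_, fun hj => ⟨fun h => ?_, ?_⟩⟩
  · by_contra! hle
    exact T.not_maxCell_lt hj (lt_of_le_of_ne (Prod.mk_le_mk.2 ⟨le_rfl, hle⟩) hne.symm)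
  · exact hj.ne (congrArg Prod.snd h)
  · exact T.shape.up_left_mem le_rfl hj.le T.maxCell_mem

theorem isAddableRow_eraseMax : T.eraseMax.shape.IsAddableRow T.maxCell.1 := by
  intro d hd
  rw [rowLen_eraseMax, Prod.mk.eta] at hd
  exact (T.mem_shape_eraseMax).2 ⟨hd.ne, T.shape.isLowerSet hd.le T.maxCell_mem⟩

end EraseMax

noncomputable def addMax (T : SYT n) (i : ℕ) (h : T.shape.IsAddableRow i) : SYT (n + 1) :=
  mk' (T.shape.addBox i) (update T.entry (i, T.shape.rowLen i) (n + 1))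
    (fun c hc => by
      rw [mem_addBox h, not_or] at hc
      rw [update_of_ne hc.1]
      exact T.zero_outside c (mt (mem_cells c).1 hc.2))
    (by
      have hcells : ((T.shape.addBox i).cells : Set (ℕ × ℕ)) =
          insert (i, T.shape.rowLen i) (T.shape.cells : Set (ℕ × ℕ)) := by
        ext c
        simp only [mem_coe, mem_cells, mem_addBox h, Set.mem_insert_iff]
      rw [hcells, ← Set.insert_Icc_right_eq_Icc_add_one (a := 1) (b := n) (by omega)]
      exact T.bijOn.update_insert (fun hc => T.shape.mk_rowLen_notMem i ((mem_cells _).1 hc))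
        (by simp : n + 1 ∉ Set.Icc 1 n))
    (fun a b hab hb => by
      have ha : a ∈ T.shape := by
        rcases (mem_addBox h).1 hb with rfl | hb
        exacts [h a hab, T.shape.isLowerSet hab.le hb]
      rw [update_of_ne (by rintro rfl; exact T.shape.mk_rowLen_notMem i ha)]
      rcases (mem_addBox h).1 hb with rfl | hb
      · rw [update_self]
        exact Nat.lt_succ_of_le (T.entry_mem_Icc ha).2
      · rw [update_of_ne (by rintro rfl; exact T.shape.mk_rowLen_notMem i hb)]
        exact T.entry_lt_entry hab hb)

theorem maxCell_addMax (T : SYT n) (i : ℕ) (h : T.shape.IsAddableRow i) :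
    (T.addMax i h).maxCell = (i, T.shape.rowLen i) :=
  ((T.addMax i h).eq_maxCell_of_entry ((mem_addBox h).2 (.inl rfl)) (update_self ..)).symm

theorem eraseMax_addMax (T : SYT n) (i : ℕ) (h : T.shape.IsAddableRow i) :
    (T.addMax i h).eraseMax = T := by
  refine ext_entry ?_
  change update (update T.entry _ _) (T.addMax i h).maxCell 0 = T.entry
  rw [maxCell_addMax, update_idem, update_eq_self_iff,
    T.zero_outside _ (mt (mem_cells _).1 (T.shape.mk_rowLen_notMem i))]

theorem addMax_eraseMax (T : SYT (n + 1)) :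
    T.eraseMax.addMax T.maxCell.1 T.isAddableRow_eraseMax = T := by
  refine ext_entry ?_
  change update (update T.entry T.maxCell 0) (_, T.eraseMax.shape.rowLen _) (n + 1) = T.entry
  rw [rowLen_eraseMax, Prod.mk.eta, update_idem]
  exact update_eq_self_iff.2 T.entry_maxCell.symm

noncomputable def succEquiv (n : ℕ) :
    SYT (n + 1) ≃ Σ T : SYT n, {i // i ∈ T.shape.addableRows} where
  toFun T := ⟨T.eraseMax, T.maxCell.1, mem_addableRows.2 T.isAddableRow_eraseMax⟩
  invFun p := p.1.addMax p.2 (mem_addableRows.1 p.2.2)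
  left_inv := addMax_eraseMax
  right_inv := fun ⟨T, i, _⟩ => Sigma.subtype_ext (eraseMax_addMax T i _)
    (congrArg Prod.fst (maxCell_addMax T i _))

instance finite : ∀ n, Finite (SYT n)
  | 0 => Finite.of_subsingleton
  | n + 1 => have := finite n; Finite.of_equiv _ (succEquiv n).symm

noncomputable instance : Fintype (SYT n) :=
  Fintype.ofFinite _

end SYT

theorem sum_schurDim_shape (N n : ℕ) : ∑ T : SYT n, schurDim T.shape N = N ^ n := by
  induction n with
  | zero =>
    rw [Fintype.sum_subsingleton _ SYT.empty]
    simp [SYT.empty, SYT.mk', schurDim, fPoly, hookProd]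
  | succ n ih =>
    rw [← (SYT.succEquiv n).symm.sum_comp, Fintype.sum_sigma]
    calc ∑ T : SYT n, ∑ i : {i // i ∈ T.shape.addableRows}, schurDim (T.shape.addBox i) N
        = ∑ T : SYT n, N * schurDim T.shape N := sum_congr rfl fun T _ => by
          rw [← sum_subtype _ (fun _ => Iff.rfl) fun i => schurDim (T.shape.addBox i) N,
            sum_schurDim_addBox]
      _ = N ^ (n + 1) := by rw [← mul_sum, ih, pow_succ, mul_comm]

theorem sum_dim_eq_pow_general {n N : ℕ} :
    ∑ᶠ T : SYT n, fPoly T.shape N / (hookProd T.shape : ℂ) = (N : ℂ) ^ n := by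
  rw [finsum_eq_sum_of_fintype]
  exact sum_schurDim_shape N n

/-- **Completeness of dimensions.**  For every `n ≥ 1` and `N ≥ 1`, the dimensions of the
irreducible invariant subspaces sum to the full dimension:
`∑_{T ∈ SYT_n} f_T(N)/H(T) = N^n`.  (The sum is a `finsum`: there are only finitely
many standard Young tableaux with `n` boxes.) -/
theorem sum_dim_eq_pow {n N : ℕ} (hn : 1 ≤ n) (hN : 1 ≤ N) :
    ∑ᶠ T : SYT n, fPoly T.shape N / (hookProd T.shape : ℂ) = (N : ℂ) ^ n :=
  sum_dim_eq_pow_general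
end
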